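/- arXiv:2002.11154 — 8 statements merged into one kernel-verified Lean document; each statement's English description precedes it below -/
import Mathlib

section
/- Let p > q ≥ 1. Suppose that for j = 1,…,p, (M_j,d_j) is a proper geodesic metric space containing an almost geodesic sequence, and for j = 1,…,q, (N_j,ρ_j) is a proper geodesic metric space with basepoint b_j such that every horofunction of (N_j,ρ_j) is a Busemann point and δ(h,h') = ∞ for every pair of distinct Busemann points h ≠ h' of (N_j,ρ_j). Then there exists no isometric embedding of (∏_{j=1}^p M_j, d_∞) into (∏_{j=1}^q N_j, d_∞). -/
open Filter Topology

noncomputable section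

/-- `horo b y z = d(z,y) - d(b,y)`, the function `h_y` with basepoint `b`. -/
def horo {M : Type*} [MetricSpace M] (b y z : M) : ℝ := dist z y - dist b y

/-- `HoroLim b y h` : the functions `h_{y^n}` (with basepoint `b`) converge pointwise to `h`. -/
def HoroLim {M : Type*} [MetricSpace M] (b : M) (y : ℕ → M) (h : M → ℝ) : Prop :=
  ∀ z : M, Filter.Tendsto (fun n => horo b (y n) z) Filter.atTop (nhds (h z))

/-- `h` is a horofunction of `(M,d)` with basepoint `b`. -/
def IsHorofunction {M : Type*} [MetricSpace M] (b : M) (h : M → ℝ) : Prop :=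
  (∃ y : ℕ → M, HoroLim b y h) ∧ ∀ y : M, h ≠ horo b y

/-- A metric space is geodesic: any two points are joined by a geodesic path. -/
def IsGeodesicSpace (M : Type*) [MetricSpace M] : Prop :=
  ∀ x y : M, ∃ γ : ℝ → M, γ 0 = x ∧ γ (dist x y) = y ∧
    ∀ s ∈ Set.Icc (0 : ℝ) (dist x y), ∀ t ∈ Set.Icc (0 : ℝ) (dist x y),
      dist (γ s) (γ t) = |s - t|

/-- Almost geodesic sequence. -/
def IsAlmostGeodesicSeq {M : Type*} [MetricSpace M] (y : ℕ → M) : Prop :=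
  Filter.Tendsto (fun n => dist (y n) (y 0)) Filter.atTop Filter.atTop ∧
  ∀ ε > (0 : ℝ), ∃ N : ℕ, ∀ m k : ℕ, N ≤ k → k ≤ m →
    dist (y m) (y k) + dist (y k) (y 0) - dist (y m) (y 0) < ε

/-- A Busemann point: a horofunction that is the limit of an almost geodesic sequence. -/
def IsBusemannPoint {M : Type*} [MetricSpace M] (b : M) (h : M → ℝ) : Prop :=
  IsHorofunction b h ∧ ∃ y : ℕ → M, IsAlmostGeodesicSeq y ∧ HoroLim b y h

/-- Detour cost `H(h₁,h₂)`, with values in `EReal` (so it may be `⊤ = ∞`). -/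
def detourCost {M : Type*} [MetricSpace M] (b : M) (h₁ h₂ : M → ℝ) : EReal :=
  ⨅ z : {z : ℕ → M // HoroLim b z h₁},
    Filter.liminf (fun n => ((dist b (z.1 n) + h₂ (z.1 n) : ℝ) : EReal)) Filter.atTop

/-- Detour distance `δ(h₁,h₂) = H(h₁,h₂) + H(h₂,h₁)`. -/
def detourDist {M : Type*} [MetricSpace M] (b : M) (h₁ h₂ : M → ℝ) : EReal :=
  detourCost b h₁ h₂ + detourCost b h₂ h₁

/-!
Each `M i` contains a geodesic ray `ℕ → M i` (a compactness argument on closed balls, using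
that the space is proper, geodesic and unbounded), so the product contains an isometric copy of
`ℕ^p` with the sup metric, and it suffices to rule out an isometry `ψ : ℕ^p → ∏ j, N j`.

Take the `p` rays `x_k n = n + e_k` in `ℕ^p`. Along a subsequence, in every factor `j` the points
`ψ (x_k n) j` converge to a horofunction `G_kj`, and `n - ρ_j (b_j, ψ (x_k n) j)` either tends to
a real `c_kj` or to `∞`. Since the sup metric is a maximum over the finitely many factors, for
every `y` the limit of `d (y, x_k n) - n` is the maximum of `G_kj (ψ y j) - c_kj` over the factors
with finite `c_kj`. At `y_l = 1 - e_l` this limit is `1` if `l = k` and `0` otherwise. So every `k`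
has a factor `j` where the maximum `1` is attained, and as `p > q` two rays `k ≠ k'` share one.
The two rays stay at distance `1`, so `G_kj` and `G_k'j` have finite detour costs to each other,
and the hypothesis on `N_j` makes them equal; then `c_k'j ≥ c_kj + 1` and `c_kj ≥ c_k'j + 1`.
-/

open TopologicalSpace

section Horofunction

variable {X : Type*} [MetricSpace X] {b : X}

lemma abs_horo_sub_horo_le_dist (b y z z' : X) : |horo b y z - horo b y z'| ≤ dist z z' := by
  simpa [horo] using abs_dist_sub_le z z' y

lemma abs_horo_sub_horo_le_two_mul_dist (b y y' z : X) :
    |horo b y z - horo b y' z| ≤ 2 * dist y y' := by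
  have h₁ := abs_dist_sub_le y y' z
  have h₂ := abs_dist_sub_le y y' b
  rw [dist_comm y z, dist_comm y' z] at h₁
  rw [dist_comm y b, dist_comm y' b] at h₂
  calc |horo b y z - horo b y' z| = |(dist z y - dist z y') - (dist b y - dist b y')| := by
        rw [horo, horo]; ring_nf
    _ ≤ |dist z y - dist z y'| + |dist b y - dist b y'| := abs_sub _ _
    _ ≤ 2 * dist y y' := by linarith

lemma horo_mem_Icc (b y z : X) : horo b y z ∈ Set.Icc (-dist z b) (dist z b) :=
  abs_le.1 (abs_dist_sub_le z b y)

lemma exists_horoLim_of_denseRange {y s : ℕ → X} (hs : DenseRange s)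
    (h : ∀ m, ∃ a, Tendsto (fun n => horo b (y n) (s m)) atTop (𝓝 a)) : ∃ g, HoroLim b y g := by
  suffices ∀ z, CauchySeq fun n => horo b (y n) z by
    choose g hg using fun z => cauchySeq_tendsto_of_complete (this z)
    exact ⟨g, hg⟩
  intro z
  rw [Metric.cauchySeq_iff']
  intro ε hε
  obtain ⟨m, hm⟩ := Metric.denseRange_iff.1 hs z (ε / 3) (by positivity)
  obtain ⟨a, ha⟩ := h m
  obtain ⟨K, hK⟩ := Metric.cauchySeq_iff'.1 ha.cauchySeq (ε / 3) (by positivity)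
  refine ⟨K, fun n hn => ?_⟩
  have h₁ := abs_horo_sub_horo_le_dist b (y n) z (s m)
  have h₂ := abs_horo_sub_horo_le_dist b (y K) z (s m)
  have h₃ := hK n hn
  calc dist (horo b (y n) z) (horo b (y K) z)
      ≤ dist (horo b (y n) z) (horo b (y n) (s m)) + dist (horo b (y n) (s m)) (horo b (y K) (s m))
        + dist (horo b (y K) (s m)) (horo b (y K) z) := dist_triangle4 _ _ _ _
    _ < ε := by
      rw [Real.dist_eq, Real.dist_eq, Real.dist_eq, abs_sub_comm (horo b (y K) (s m))]
      rw [Real.dist_eq] at h₃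
      linarith

lemma HoroLim.le_add_two_mul {y y' : ℕ → X} {h h' : X → ℝ} (hy : HoroLim b y h)
    (hy' : HoroLim b y' h') {D : ℝ} (hD : ∀ n, dist (y n) (y' n) ≤ D) (x : X) :
    h' x ≤ h x + 2 * D :=
  le_of_tendsto_of_tendsto (hy' x) ((hy x).add_const _) <| Eventually.of_forall fun n => by
    have := abs_le.1 (abs_horo_sub_horo_le_two_mul_dist b (y n) (y' n) x)
    linarith [hD n]

lemma HoroLim.sub_le_of_eventually_dist_le {y : ℕ → X} {h : X → ℝ} {τ : ℕ → ℝ} {c L : ℝ}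
    (hy : HoroLim b y h) (hc : Tendsto (fun n => τ n - dist b (y n)) atTop (𝓝 c)) {x : X}
    (hx : ∀ᶠ n in atTop, dist x (y n) ≤ τ n + L) : h x - c ≤ L := by
  have : Tendsto (fun n => dist x (y n) - τ n) atTop (𝓝 (h x - c)) :=
    ((hy x).sub hc).congr fun n => by rw [horo]; ring
  exact le_of_tendsto this (hx.mono fun n hn => by linarith)

lemma HoroLim.isHorofunction {y : ℕ → X} {h : X → ℝ} (hy : HoroLim b y h)
    (hh : ∀ C, ∃ x, h x < C) : IsHorofunction b h := by
  refine ⟨⟨y, hy⟩, fun x hx => ?_⟩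
  obtain ⟨z, hz⟩ := hh (-dist b x)
  rw [hx, horo] at hz
  linarith [dist_nonneg (x := z) (y := x)]

lemma HoroLim.le_sub_of_dist_le {y : ℕ → X} {h : X → ℝ} {τ : ℕ → ℝ} {c : ℝ} (hy : HoroLim b y h)
    (hc : Tendsto (fun n => τ n - dist b (y n)) atTop (𝓝 c))
    (hgeo : ∀ m n, m ≤ n → dist (y m) (y n) ≤ τ n - τ m) (m : ℕ) : h (y m) ≤ c - τ m := by
  have := hy.sub_le_of_eventually_dist_le hc (L := -τ m) <|
    eventually_atTop.2 ⟨m, fun n hn => by linarith [hgeo m n hn]⟩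
  linarith

lemma HoroLim.isHorofunction_of_dist_le {y : ℕ → X} {h : X → ℝ} {τ : ℕ → ℝ} {c : ℝ}
    (hy : HoroLim b y h) (hc : Tendsto (fun n => τ n - dist b (y n)) atTop (𝓝 c))
    (hτ : Tendsto τ atTop atTop) (hgeo : ∀ m n, m ≤ n → dist (y m) (y n) ≤ τ n - τ m) :
    IsHorofunction b h :=
  hy.isHorofunction fun C =>
    let ⟨m, hm⟩ := (hτ.eventually_gt_atTop (c - C)).exists
    ⟨y m, by linarith [hy.le_sub_of_dist_le hc hgeo m]⟩

lemma detourCost_le_of_eventually_le {y : ℕ → X} {h₁ h₂ : X → ℝ} (hy : HoroLim b y h₁) {C : ℝ}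
    (hC : ∀ᶠ n in atTop, dist b (y n) + h₂ (y n) ≤ C) : detourCost b h₁ h₂ ≤ C :=
  (iInf_le _ ⟨y, hy⟩).trans <| liminf_le_of_frequently_le' <|
    (hC.mono fun _ hn => EReal.coe_le_coe_iff.2 hn).frequently

lemma HoroLim.detourCost_le_of_dist_le {y : ℕ → X} {h h' : X → ℝ} {τ : ℕ → ℝ} {c C : ℝ}
    (hy : HoroLim b y h) (hc : Tendsto (fun n => τ n - dist b (y n)) atTop (𝓝 c))
    (hgeo : ∀ m n, m ≤ n → dist (y m) (y n) ≤ τ n - τ m) (hh' : ∀ x, h' x ≤ h x + C) :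
    detourCost b h h' ≤ ((C + 1 : ℝ) : EReal) :=
  detourCost_le_of_eventually_le hy <| (hc.eventually (eventually_gt_nhds (sub_one_lt c))).mono
    fun n hn => by linarith [hh' (y n), hy.le_sub_of_dist_le hc hgeo n]

lemma eq_of_detourCost_le
    (hbus : ∀ h, IsHorofunction b h → IsBusemannPoint b h)
    (hdet : ∀ h h', IsBusemannPoint b h → IsBusemannPoint b h' → h ≠ h' → detourDist b h h' = ⊤)
    {h h' : X → ℝ} (hh : IsHorofunction b h) (hh' : IsHorofunction b h') {C C' : ℝ}
    (hC : detourCost b h h' ≤ C) (hC' : detourCost b h' h ≤ C') : h = h' := by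
  by_contra hne
  have htop := hdet h h' (hbus h hh) (hbus h' hh') hne
  have : detourDist b h h' ≤ ((C + C' : ℝ) : EReal) := by
    rw [EReal.coe_add]; exact add_le_add hC hC'
  rw [htop, top_le_iff] at this
  exact EReal.coe_ne_top _ this

end Horofunction

lemma exists_mem_le_of_frequently_exists_le {κ : Type*} [Finite κ] {a : κ → ℕ → ℝ} {A : κ → ℝ}
    {s : Set κ} (hs : ∀ j ∈ s, Tendsto (a j) atTop (𝓝 (A j)))
    (hsc : ∀ j ∉ s, Tendsto (a j) atTop atBot) {L : ℝ} (h : ∃ᶠ n in atTop, ∃ j, L ≤ a j n) :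
    ∃ j ∈ s, L ≤ A j := by
  by_contra! hA
  have hlt : ∀ j, ∀ᶠ n in atTop, a j n < L := fun j => by
    by_cases hj : j ∈ s
    · exact (hs j hj).eventually (eventually_lt_nhds (hA j hj))
    · exact (hsc j hj).eventually (eventually_lt_atBot L)
  obtain ⟨n, ⟨j, hj⟩, hn⟩ := (h.and_eventually (eventually_all.2 hlt)).exists
  exact (hn j).not_ge hj

lemma exists_mem_le_horo_sub {κ : Type*} [Fintype κ] {N : κ → Type*} [∀ j, MetricSpace (N j)]
    {b : ∀ j, N j} {w : ℕ → ∀ j, N j} {G : ∀ j, N j → ℝ} {τ : ℕ → ℝ} {c : κ → ℝ} {s : Set κ}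
    (hG : ∀ j, HoroLim (b j) (fun n => w n j) (G j)) (hτ : Tendsto τ atTop atTop)
    (hs : ∀ j ∈ s, Tendsto (fun n => τ n - dist (b j) (w n j)) atTop (𝓝 (c j)))
    (hsc : ∀ j ∉ s, Tendsto (fun n => τ n - dist (b j) (w n j)) atTop atTop)
    {ζ : ∀ j, N j} {L : ℝ} (hζ : ∀ᶠ n in atTop, τ n + L ≤ dist ζ (w n)) :
    ∃ j ∈ s, L ≤ G j (ζ j) - c j := by
  have hdist : ∀ j n, dist (ζ j) (w n j) - τ n =
      horo (b j) (w n j) (ζ j) - (τ n - dist (b j) (w n j)) := fun j n => by rw [horo]; ring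
  refine exists_mem_le_of_frequently_exists_le (a := fun j n => dist (ζ j) (w n j) - τ n)
    (fun j hj => ((hG j (ζ j)).sub (hs j hj)).congr fun n => (hdist j n).symm)
    (fun j hj => ((hG j (ζ j)).add_atBot (tendsto_neg_atTop_atBot.comp (hsc j hj))).congr
      fun n => by rw [hdist]; rfl) ?_
  refine (hζ.and (hτ.eventually_gt_atTop (-L))).frequently.mono fun n ⟨hn, hpos⟩ => ?_
  by_contra! hlt
  have hlt' : ∀ j, dist (ζ j) (w n j) < τ n + L := fun j => by linarith [hlt j]
  linarith [(dist_pi_lt_iff (by linarith)).2 hlt']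

lemma exists_strictMono_horoLim_tendsto {ι : Type*} [Countable ι] {X : ι → Type*}
    [∀ i, MetricSpace (X i)] [∀ i, SeparableSpace (X i)] (b : ∀ i, X i) (y : ∀ i, ℕ → X i)
    (u : ι → ℕ → ℝ) (hu : ∀ i, BddBelow (Set.range (u i))) :
    ∃ φ : ℕ → ℕ, StrictMono φ ∧ ∃ (g : ∀ i, X i → ℝ) (c : ι → ℝ), ∀ i,
      HoroLim (b i) (fun n => y i (φ n)) (g i) ∧
      (Tendsto (fun n => u i (φ n)) atTop (𝓝 (c i)) ∨
        Tendsto (fun n => u i (φ n)) atTop atTop) := by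
  have : ∀ i, Nonempty (X i) := fun i => ⟨b i⟩
  let s : ∀ i, ℕ → X i := fun i => denseSeq (X i)
  let F : ℕ → (ι × ℕ → ℝ) × (ι → EReal) := fun n =>
    (fun im => horo (b im.1) (y im.1 n) (s im.1 im.2), fun i => u i n)
  have hK : IsCompact ((Set.univ.pi fun im : ι × ℕ =>
      Set.Icc (-dist (s im.1 im.2) (b im.1)) (dist (s im.1 im.2) (b im.1))) ×ˢ Set.univ) :=
    (isCompact_univ_pi fun _ => isCompact_Icc).prod (isCompact_univ (X := ι → EReal))
  obtain ⟨a, -, φ, hφ, ha⟩ := hK.tendsto_subseq (x := F) fun n =>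
    ⟨fun im _ => horo_mem_Icc _ _ _, trivial⟩
  have ha₁ := tendsto_pi_nhds.1 (Prod.tendsto_iff _ _ |>.1 ha).1
  have ha₂ := tendsto_pi_nhds.1 (Prod.tendsto_iff _ _ |>.1 ha).2
  have hg : ∀ i, ∃ g, HoroLim (b i) (fun n => y i (φ n)) g := fun i =>
    exists_horoLim_of_denseRange (denseRange_denseSeq (X i)) fun m => ⟨_, ha₁ (i, m)⟩
  have hc : ∀ i, ∃ c, Tendsto (fun n => u i (φ n)) atTop (𝓝 c) ∨
      Tendsto (fun n => u i (φ n)) atTop atTop := fun i => by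
    obtain ⟨C, hC⟩ := hu i
    have hCa : (C : EReal) ≤ a.2 i :=
      ge_of_tendsto (ha₂ i) (Eventually.of_forall fun n => EReal.coe_le_coe_iff.2 (hC ⟨φ n, rfl⟩))
    induction hai : a.2 i using EReal.rec with
    | bot => rw [hai] at hCa; exact absurd hCa (not_le.2 (EReal.bot_lt_coe C))
    | coe c => exact ⟨c, Or.inl (EReal.tendsto_coe.1 (hai ▸ ha₂ i))⟩
    | top => exact ⟨0, Or.inr (EReal.tendsto_coe_nhds_top_iff.1 (hai ▸ ha₂ i))⟩
  choose g hg using hg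
  choose c hc using hc
  exact ⟨φ, hφ, g, c, fun i => ⟨hg i, hc i⟩⟩

section NatPi

variable {ι : Type*} [DecidableEq ι]

def diagSucc (k : ι) (n : ℕ) : ι → ℕ := Function.update (fun _ => n) k (n + 1)

variable [Fintype ι]

lemma dist_diagSucc_diagSucc_same (k : ι) (m n : ℕ) :
    dist (diagSucc k m) (diagSucc k n) = dist m n := by
  refine le_antisymm ((dist_pi_le_iff dist_nonneg).2 fun i => ?_) ?_
  · rcases eq_or_ne i k with rfl | hik
    · simp [diagSucc, Nat.dist_eq]
    · simp [diagSucc, hik]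
  · calc dist m n = dist (diagSucc k m k) (diagSucc k n k) := by simp [diagSucc, Nat.dist_eq]
      _ ≤ _ := dist_le_pi_dist _ _ k

lemma dist_diagSucc_le_one (k k' : ι) (n : ℕ) : dist (diagSucc k n) (diagSucc k' n) ≤ 1 :=
  (dist_pi_le_iff zero_le_one).2 fun i => by
    simp only [diagSucc, Function.update_apply, Nat.dist_eq]
    split_ifs <;> simp

lemma dist_update_one_diagSucc (k l : ι) {n : ℕ} (hn : 1 ≤ n) :
    dist (Function.update (fun _ => 1) l 0 : ι → ℕ) (diagSucc k n) =
      n + if l = k then 1 else 0 := by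
  have hn' : (1 : ℝ) ≤ n := by exact_mod_cast hn
  obtain ⟨h₀, h₁⟩ : (0 : ℝ) ≤ (if l = k then 1 else 0) ∧ (if l = k then (1 : ℝ) else 0) ≤ 1 := by
    split_ifs <;> norm_num
  refine le_antisymm ((dist_pi_le_iff (by positivity)).2 fun i => ?_) ?_
  · rcases eq_or_ne i k with rfl | hik <;> rcases eq_or_ne i l with rfl | hil <;>
      simp [*, diagSucc, Nat.dist_eq, abs_le, Ne.symm] <;>
      first | linarith | constructor <;> linarith
  · refine le_trans (le_of_eq ?_) (dist_le_pi_dist _ _ k)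
    rcases eq_or_ne l k with rfl | hlk
    · simp [diagSucc, Nat.dist_eq]
      rw [abs_of_nonpos (by linarith)]
      ring
    · simp [diagSucc, Nat.dist_eq, Function.update_of_ne hlk.symm, hlk]

end NatPi

section Core

variable {ι κ : Type*} [Fintype ι] [DecidableEq ι] [Fintype κ] {N : κ → Type*}
  [∀ j, MetricSpace (N j)] {b : ∀ j, N j} {ψ : (ι → ℕ) → ∀ j, N j} {φ : ℕ → ℕ}

lemma Isometry.dist_diagSucc_apply_le (hψ : Isometry ψ) (hφ : StrictMono φ) (k : ι) (j : κ)
    {m n : ℕ} (hmn : m ≤ n) :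
    dist (ψ (diagSucc k (φ m)) j) (ψ (diagSucc k (φ n)) j) ≤ (φ n : ℝ) - φ m := by
  calc _ ≤ dist (ψ (diagSucc k (φ m))) (ψ (diagSucc k (φ n))) := dist_le_pi_dist _ _ j
    _ = (φ n : ℝ) - φ m := by
      rw [hψ.dist_eq, dist_diagSucc_diagSucc_same, Nat.dist_eq, abs_sub_comm,
        abs_of_nonneg (sub_nonneg.2 (Nat.cast_le.2 (hφ.monotone hmn)))]

lemma Isometry.neg_dist_le_sub_dist_diagSucc (hψ : Isometry ψ) (k : ι) (j : κ) (n : ℕ) :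
    -dist (b j) (ψ (diagSucc k 0) j) ≤ n - dist (b j) (ψ (diagSucc k n) j) := by
  have h₁ := hψ.dist_diagSucc_apply_le strictMono_id k j (Nat.zero_le n)
  have h₂ := dist_triangle (b j) (ψ (diagSucc k 0) j) (ψ (diagSucc k n) j)
  simp only [id, Nat.cast_zero, sub_zero] at h₁
  linarith

lemma exists_le_horo_sub_update (hψ : Isometry ψ) (hφ : StrictMono φ) {G : ∀ j, N j → ℝ}
    {c : κ → ℝ} {k : ι} (hG : ∀ j, HoroLim (b j) (fun n => ψ (diagSucc k (φ n)) j) (G j))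
    (hc : ∀ j, Tendsto (fun n => (φ n : ℝ) - dist (b j) (ψ (diagSucc k (φ n)) j)) atTop (𝓝 (c j)) ∨
      Tendsto (fun n => (φ n : ℝ) - dist (b j) (ψ (diagSucc k (φ n)) j)) atTop atTop) :
    ∃ j, Tendsto (fun n => (φ n : ℝ) - dist (b j) (ψ (diagSucc k (φ n)) j)) atTop (𝓝 (c j)) ∧
      1 ≤ G j (ψ (Function.update (fun _ => 1) k 0) j) - c j := by
  have hτ := (tendsto_natCast_atTop_atTop (R := ℝ)).comp hφ.tendsto_atTop
  simpa using exists_mem_le_horo_sub hG hτ (s := {j | Tendsto _ atTop (𝓝 (c j))}) (fun j hj => hj)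
    (fun j hj => (hc j).resolve_left hj) <|
    (hφ.tendsto_atTop.eventually_ge_atTop 1).mono fun n hn => by
      rw [hψ.dist_eq, dist_update_one_diagSucc k k hn, if_pos rfl]; rfl

lemma horo_sub_update_le (hψ : Isometry ψ) (hφ : StrictMono φ) {k l : ι} (hlk : l ≠ k) {j : κ}
    {g : N j → ℝ} {c : ℝ} (hg : HoroLim (b j) (fun n => ψ (diagSucc k (φ n)) j) g)
    (hc : Tendsto (fun n => (φ n : ℝ) - dist (b j) (ψ (diagSucc k (φ n)) j)) atTop (𝓝 c)) :
    g (ψ (Function.update (fun _ => 1) l 0) j) - c ≤ 0 := by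
  refine hg.sub_le_of_eventually_dist_le hc <|
    (hφ.tendsto_atTop.eventually_ge_atTop 1).mono fun n hn => ?_
  calc _ ≤ dist (ψ (Function.update (fun _ => 1) l 0)) (ψ (diagSucc k (φ n))) :=
        dist_le_pi_dist _ _ j
    _ = (φ n : ℝ) + 0 := by rw [hψ.dist_eq, dist_update_one_diagSucc k l hn, if_neg hlk]

lemma detourCost_le_of_diagSucc (hψ : Isometry ψ) (hφ : StrictMono φ) {k k' : ι} {j : κ}
    {g g' : N j → ℝ} {c : ℝ} (hg : HoroLim (b j) (fun n => ψ (diagSucc k (φ n)) j) g)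
    (hc : Tendsto (fun n => (φ n : ℝ) - dist (b j) (ψ (diagSucc k (φ n)) j)) atTop (𝓝 c))
    (hg' : HoroLim (b j) (fun n => ψ (diagSucc k' (φ n)) j) g') :
    detourCost (b j) g g' ≤ ((3 : ℝ) : EReal) := by
  have hclose : ∀ n, dist (ψ (diagSucc k (φ n)) j) (ψ (diagSucc k' (φ n)) j) ≤ 1 := fun n =>
    (dist_le_pi_dist _ _ j).trans (hψ.dist_eq _ _ ▸ dist_diagSucc_le_one _ _ _)
  convert hg.detourCost_le_of_dist_le hc (fun _ _ => hψ.dist_diagSucc_apply_le hφ k j)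
    (hg.le_add_two_mul hg' hclose) using 2
  norm_num

lemma horoLim_diagSucc_eq (hψ : Isometry ψ) (hφ : StrictMono φ) {k k' : ι} {j : κ}
    (hbus : ∀ h, IsHorofunction (b j) h → IsBusemannPoint (b j) h)
    (hdet : ∀ h h', IsBusemannPoint (b j) h → IsBusemannPoint (b j) h' → h ≠ h' →
      detourDist (b j) h h' = ⊤)
    {g g' : N j → ℝ} {c c' : ℝ} (hg : HoroLim (b j) (fun n => ψ (diagSucc k (φ n)) j) g)
    (hc : Tendsto (fun n => (φ n : ℝ) - dist (b j) (ψ (diagSucc k (φ n)) j)) atTop (𝓝 c))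
    (hg' : HoroLim (b j) (fun n => ψ (diagSucc k' (φ n)) j) g')
    (hc' : Tendsto (fun n => (φ n : ℝ) - dist (b j) (ψ (diagSucc k' (φ n)) j)) atTop (𝓝 c')) :
    g = g' := by
  have hτ := (tendsto_natCast_atTop_atTop (R := ℝ)).comp hφ.tendsto_atTop
  exact eq_of_detourCost_le hbus hdet
    (hg.isHorofunction_of_dist_le hc hτ fun _ _ => hψ.dist_diagSucc_apply_le hφ k j)
    (hg'.isHorofunction_of_dist_le hc' hτ fun _ _ => hψ.dist_diagSucc_apply_le hφ k' j)
    (detourCost_le_of_diagSucc hψ hφ hg hc hg') (detourCost_le_of_diagSucc hψ hφ hg' hc' hg)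

end Core

theorem not_exists_isometry_pi_nat {ι κ : Type*} [Fintype ι] [Fintype κ]
    (hcard : Fintype.card κ < Fintype.card ι) {N : κ → Type*} [∀ j, MetricSpace (N j)]
    [∀ j, SeparableSpace (N j)] (b : ∀ j, N j)
    (hbus : ∀ j, ∀ h : N j → ℝ, IsHorofunction (b j) h → IsBusemannPoint (b j) h)
    (hdet : ∀ j, ∀ h h' : N j → ℝ, IsBusemannPoint (b j) h → IsBusemannPoint (b j) h' →
      h ≠ h' → detourDist (b j) h h' = ⊤) :
    ¬ ∃ ψ : (ι → ℕ) → ∀ j, N j, Isometry ψ := by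
  classical
  rintro ⟨ψ, hψ⟩
  obtain ⟨φ, hφ, G, c, hlim⟩ := exists_strictMono_horoLim_tendsto (fun kj : ι × κ => b kj.2)
    (fun kj n => ψ (diagSucc kj.1 n) kj.2)
    (fun kj n => n - dist (b kj.2) (ψ (diagSucc kj.1 n) kj.2)) fun kj =>
      ⟨_, Set.forall_mem_range.2 (hψ.neg_dist_le_sub_dist_diagSucc kj.1 kj.2)⟩
  choose J hJ hJle using fun k => exists_le_horo_sub_update hψ hφ (fun j => (hlim (k, j)).1)
    fun j => (hlim (k, j)).2
  obtain ⟨k, k', hkk', hJkk'⟩ := Fintype.exists_ne_map_eq_of_card_lt J hcard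
  have hJk := hJkk' ▸ hJ k
  have hGeq : G (k, J k') = G (k', J k') := horoLim_diagSucc_eq hψ hφ (hbus _) (hdet _)
    (hlim (k, J k')).1 hJk (hlim (k', J k')).1 (hJ k')
  have hself := hJle k
  have hself' := hJle k'
  have hother := horo_sub_update_le hψ hφ hkk' (hlim (k', J k')).1 (hJ k')
  have hother' := horo_sub_update_le hψ hφ hkk'.symm (hlim (k, J k')).1 hJk
  rw [hJkk', hGeq] at hself
  rw [hGeq] at hother'
  linarith

lemma exists_isometry_nat {X : Type*} [MetricSpace X] [ProperSpace X] (hX : IsGeodesicSpace X)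
    {x : X} (hx : ∀ R : ℝ, ∃ z, R ≤ dist x z) : ∃ r : ℕ → X, Isometry r := by
  choose z hz using fun n : ℕ => hx n
  choose γ hγ₀ _ hγ using fun n => hX x (z n)
  have hmem : ∀ n (u : ℝ), 0 ≤ u → min u (dist x (z n)) ∈ Set.Icc 0 (dist x (z n)) :=
    fun n u hu => ⟨le_min hu dist_nonneg, min_le_right _ _⟩
  have hmem₀ : ∀ n, (0 : ℝ) ∈ Set.Icc 0 (dist x (z n)) := fun n => ⟨le_rfl, dist_nonneg⟩
  let f : ℕ → ℕ → X := fun n u => γ n (min u (dist x (z n)))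
  have hf : ∀ n, f n ∈ Set.univ.pi fun u : ℕ => Metric.closedBall x u := fun n u _ => by
    rw [Metric.mem_closedBall, ← hγ₀ n, hγ n _ (hmem n u u.cast_nonneg) 0 (hmem₀ n), sub_zero,
      abs_of_nonneg (hmem n u u.cast_nonneg).1]
    exact min_le_left _ _
  obtain ⟨r, -, φ, hφ, hr⟩ := (isCompact_univ_pi fun u : ℕ =>
    isCompact_closedBall x (u : ℝ)).tendsto_subseq hf
  refine ⟨r, Isometry.of_dist_eq fun u v => ?_⟩
  refine tendsto_nhds_unique ((tendsto_pi_nhds.1 hr u).dist (tendsto_pi_nhds.1 hr v))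
    (tendsto_const_nhds.congr' ?_)
  filter_upwards [hφ.tendsto_atTop.eventually_ge_atTop (max u v)] with n hn
  have hu : (u : ℝ) ≤ dist x (z (φ n)) := le_trans (by exact_mod_cast le_of_max_le_left hn) (hz _)
  have hv : (v : ℝ) ≤ dist x (z (φ n)) := le_trans (by exact_mod_cast le_of_max_le_right hn) (hz _)
  have := hγ (φ n) _ (hmem (φ n) u u.cast_nonneg) _ (hmem (φ n) v v.cast_nonneg)
  rw [min_eq_left hu, min_eq_left hv] at this
  simp only [Function.comp_apply, f, min_eq_left hu, min_eq_left hv, this, Nat.dist_eq]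

theorem stmt_0_general (p q : ℕ) (hpq : q < p)
    (M : Fin p → Type*) [∀ j, MetricSpace (M j)] [∀ j, ProperSpace (M j)]
    (hMgeo : ∀ j, IsGeodesicSpace (M j))
    (hMag : ∀ j, ∃ y : ℕ → M j, IsAlmostGeodesicSeq y)
    (N : Fin q → Type*) [∀ j, MetricSpace (N j)] [∀ j, ProperSpace (N j)]
    (b : ∀ j, N j)
    (hbus : ∀ j, ∀ h : N j → ℝ, IsHorofunction (b j) h → IsBusemannPoint (b j) h)
    (hdet : ∀ j, ∀ h h' : N j → ℝ, IsBusemannPoint (b j) h → IsBusemannPoint (b j) h' →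
      h ≠ h' → detourDist (b j) h h' = ⊤) :
    ¬ ∃ φ : (∀ j, M j) → (∀ j, N j), Isometry φ := by
  rintro ⟨φ, hφ⟩
  have hray : ∀ i, ∃ r : ℕ → M i, Isometry r := fun i => by
    obtain ⟨y, hy, -⟩ := hMag i
    exact exists_isometry_nat (hMgeo i) fun R =>
      let ⟨n, hn⟩ := (hy.eventually_ge_atTop R).exists
      ⟨y n, hn.trans_eq (dist_comm _ _)⟩
  choose r hr using hray
  exact not_exists_isometry_pi_nat (by simpa using hpq) b hbus hdet
    ⟨φ ∘ Pi.map r, hφ.comp (Isometry.piMap r hr)⟩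

/-- metric version of Poincaré's theorem for products. -/
theorem stmt_0 (p q : ℕ) (hq : 1 ≤ q) (hpq : q < p)
    (M : Fin p → Type*) [∀ j, MetricSpace (M j)] [∀ j, ProperSpace (M j)]
    (hMgeo : ∀ j, IsGeodesicSpace (M j))
    (hMag : ∀ j, ∃ y : ℕ → M j, IsAlmostGeodesicSeq y)
    (N : Fin q → Type*) [∀ j, MetricSpace (N j)] [∀ j, ProperSpace (N j)]
    (hNgeo : ∀ j, IsGeodesicSpace (N j))
    (b : ∀ j, N j)
    (hbus : ∀ j, ∀ h : N j → ℝ, IsHorofunction (b j) h → IsBusemannPoint (b j) h)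
    (hdet : ∀ j, ∀ h h' : N j → ℝ, IsBusemannPoint (b j) h → IsBusemannPoint (b j) h' →
      h ≠ h' → detourDist (b j) h h' = ⊤) :
    ¬ ∃ φ : (∀ j, M j) → (∀ j, N j), Isometry φ :=
  stmt_0_general p q hpq M hMgeo hMag N b hbus hdet
end
end

section
/- Let (M,d) be a proper geodesic metric space with basepoint b. If (y^n) is an almost geodesic sequence in M, then h(x) = lim_{n→∞} d(x,y^n) − d(b,y^n) exists for every x ∈ M, and the resulting function h is a horofunction of (M,d). -/
open Filter Topology

noncomputable section

private lemma aux_conv (a : ℕ → ℝ) (C : ℝ) (hbd : ∀ n, |a n| ≤ C)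
    (h : ∀ ε > (0:ℝ), ∃ N, ∀ k m, N ≤ k → k ≤ m → a m ≤ a k + ε) :
    ∃ L, Filter.Tendsto a Filter.atTop (nhds L) := by
  have hub : Filter.IsBoundedUnder (· ≤ ·) Filter.atTop a :=
    Filter.isBoundedUnder_of ⟨C, fun n => (abs_le.1 (hbd n)).2⟩
  have hlb : Filter.IsBoundedUnder (· ≥ ·) Filter.atTop a :=
    Filter.isBoundedUnder_of ⟨-C, fun n => (abs_le.1 (hbd n)).1⟩
  have hcob : Filter.IsCoboundedUnder (· ≥ ·) Filter.atTop a :=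
    hub.isCoboundedUnder_ge
  refine ⟨Filter.liminf a Filter.atTop,
    tendsto_of_le_liminf_of_limsup_le le_rfl ?_ hub hlb⟩
  refine le_of_forall_pos_le_add fun ε hε => ?_
  obtain ⟨N, hN⟩ := h (ε/2) (by positivity)
  have hfreq : ∃ᶠ k in Filter.atTop, a k < Filter.liminf a Filter.atTop + ε/2 :=
    Filter.frequently_lt_of_liminf_lt hcob (by linarith)
  obtain ⟨k, hkN, hk⟩ := (hfreq.and_eventually (Filter.eventually_ge_atTop N)).exists
  refine Filter.limsup_le_of_le hlb.isCoboundedUnder_le ?_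
  filter_upwards [Filter.eventually_ge_atTop k] with m hm
  have := hN k m hk hm
  linarith

/-- an almost geodesic sequence converges to a horofunction. -/
theorem stmt_2 (M : Type*) [MetricSpace M] [ProperSpace M]
    (hgeo : IsGeodesicSpace M) (b : M) (y : ℕ → M) (hy : IsAlmostGeodesicSeq y) :
    ∃ h : M → ℝ, HoroLim b y h ∧ IsHorofunction b h := by
  set g : M → ℕ → ℝ := fun x n => dist x (y n) - dist (y 0) (y n) with hg
  have hgbd : ∀ x n, |g x n| ≤ dist x (y 0) := by
    intro x n
    simpa [g, dist_comm] using abs_dist_sub_le x (y 0) (y n)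
  have hconv : ∀ x, ∃ L, Filter.Tendsto (g x) Filter.atTop (nhds L) := by
    intro x
    refine aux_conv (g x) (dist x (y 0)) (hgbd x) ?_
    intro ε hε
    obtain ⟨N, hN⟩ := hy.2 ε hε
    refine ⟨N, fun k m hk hkm => ?_⟩
    have h1 := hN m k hk hkm
    have h2 := dist_triangle x (y k) (y m)
    have e1 : dist (y 0) (y m) = dist (y m) (y 0) := dist_comm _ _
    have e2 : dist (y 0) (y k) = dist (y k) (y 0) := dist_comm _ _
    have e3 : dist (y k) (y m) = dist (y m) (y k) := dist_comm _ _
    simp only [g]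
    linarith
  choose ℓ hℓ using hconv
  have hHL : HoroLim b y (fun x => ℓ x - ℓ b) := by
    intro z
    have : (fun n => horo b (y n) z) = fun n => g z n - g b n := by
      funext n; simp only [horo, g]; ring
    rw [this]
    exact (hℓ z).sub (hℓ b)
  refine ⟨fun x => ℓ x - ℓ b, hHL, ⟨y, hHL⟩, ?_⟩
  intro w hw
  obtain ⟨N, hN⟩ := hy.2 1 one_pos
  have hb0 : -dist b (y 0) ≤ ℓ b :=
    ge_of_tendsto (hℓ b) (Filter.Eventually.of_forall fun n => (abs_le.1 (hgbd b n)).1)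
  have hkb : ∀ k, N ≤ k → ℓ (y k) ≤ 1 - dist (y k) (y 0) := by
    intro k hk
    refine le_of_tendsto (hℓ (y k)) ?_
    filter_upwards [Filter.eventually_ge_atTop k] with m hm
    have h1 := hN m k hk hm
    have e1 : dist (y 0) (y m) = dist (y m) (y 0) := dist_comm _ _
    have e3 : dist (y k) (y m) = dist (y m) (y k) := dist_comm _ _
    simp only [g]
    linarith
  obtain ⟨k, hk1, hk2⟩ :
      ∃ k, 1 + dist b (y 0) + dist b w < dist (y k) (y 0) ∧ N ≤ k :=
    ((hy.1.eventually_gt_atTop _).and (Filter.eventually_ge_atTop N)).exists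
  have h1 : ℓ (y k) - ℓ b = horo b w (y k) := congrFun hw (y k)
  have h2 : -dist b w ≤ horo b w (y k) := by
    have := dist_nonneg (x := y k) (y := w)
    simp only [horo]; linarith
  have h3 := hkb k hk2
  linarith
end
end

section
/- For j = 1,…,p let (M_j,d_j) be proper geodesic metric spaces, let b = (b_1,…,b_p) be a basepoint of the product (∏_{j=1}^p M_j, d_∞), and let h be a horofunction of the product with basepoint b. If (y^n) is a sequence in ∏_{j=1}^p M_j with h_{y^n} → h pointwise, then there exist a non-empty set J ⊆ {1,…,p}, horofunctions h_j of (M_j,d_j) with basepoint b_j for j ∈ J, a vector α ∈ ℝ^J with min_{j∈J} α_j = 0, and a subsequence (y^{n_k}) such that: (1) d_∞(b,y^{n_k}) − d_j(b_j, y_j^{n_k}) → α_j for all j ∈ J; (2) d_∞(b,y^{n_k}) − d_i(b_i, y_i^{n_k}) → ∞ for all i ∉ J; (3) h_{y_j^{n_k}} → h_j pointwise for all j ∈ J. Moreover, h(x) = max_{j∈J} (h_j(x_j) − α_j) for all x = (x_1,…,x_p) ∈ ∏_{j=1}^p M_j. -/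
open Filter Topology

noncomputable section

/-!
In the sup-metric, `h_y(x) = max_j (h_{y_j}(x_j) - (d_∞(b,y) - d_j(b_j,y_j)))`. Countable dense
subsets and the 1-Lipschitz property of the `h_{y_j}`, together with compactness of `[-∞, ∞]`,
give a subsequence along which every `h_{y_j}` converges pointwise and every gap
`d_∞(b,y) - d_j(b_j,y_j) ≥ 0` converges in `[0, ∞]`; `J` is the set of coordinates with finite
limiting gap, and the other coordinates drop out of the maximum. Some gap vanishes for every `n`,
so some `α_j = 0`. Since `h` is a horofunction of a proper space, `d_∞(b,y^n) → ∞`, hence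
`d_j(b_j,y_j^n) → ∞` for `j ∈ J`; in a proper geodesic space such a limit is unbounded below,
whereas every `h_w` is bounded below by `-d(b,w)`, so it is a horofunction.
-/

section Horo

variable {X : Type*} [MetricSpace X]

lemma horo_le_horo_add_dist (b y z w : X) : horo b y z ≤ horo b y w + dist z w := by
  unfold horo
  linarith [dist_triangle z w y]

lemma lipschitzWith_horo (b y : X) : LipschitzWith 1 (horo b y) :=
  LipschitzWith.of_le_add (horo_le_horo_add_dist b y)

lemma abs_horo_le (b y z : X) : |horo b y z| ≤ dist b z := by
  simpa [horo, dist_comm] using abs_dist_sub_le z b y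

lemma neg_dist_le_horo (b y z : X) : -dist b y ≤ horo b y z := by
  unfold horo
  linarith [dist_nonneg (x := z) (y := y)]

lemma HoroLim.comp {b : X} {y : ℕ → X} {h : X → ℝ} (hy : HoroLim b y h) {σ : ℕ → ℕ}
    (hσ : Tendsto σ atTop atTop) : HoroLim b (y ∘ σ) h :=
  fun z => (hy z).comp hσ

lemma HoroLim.eq_horo_of_tendsto {b : X} {y : ℕ → X} {h : X → ℝ} (hy : HoroLim b y h)
    {σ : ℕ → ℕ} (hσ : Tendsto σ atTop atTop) {w : X} (hw : Tendsto (y ∘ σ) atTop (𝓝 w)) :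
    h = horo b w :=
  funext fun z => tendsto_nhds_unique (hy.comp hσ z)
    ((tendsto_const_nhds.dist hw).sub (tendsto_const_nhds.dist hw))

lemma IsHorofunction.nontrivial {b : X} {h : X → ℝ} (hh : IsHorofunction b h) : Nontrivial X := by
  by_contra hX
  have := not_nontrivial_iff_subsingleton.1 hX
  obtain ⟨y, hy⟩ := hh.1
  have hyb : ∀ n, y n = b := fun n => Subsingleton.elim _ _
  refine hh.2 b (funext fun z => tendsto_nhds_unique (hy z) ?_)
  simp only [hyb]
  exact tendsto_const_nhds

lemma IsHorofunction.tendsto_dist_atTop [ProperSpace X] {b : X} {h : X → ℝ}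
    (hh : IsHorofunction b h) {y : ℕ → X} (hy : HoroLim b y h) :
    Tendsto (fun n => dist b (y n)) atTop atTop := by
  by_contra hcon
  simp only [tendsto_atTop, not_forall, not_eventually, not_le] at hcon
  obtain ⟨B, hB⟩ := hcon
  obtain ⟨φ, hφ, hφB⟩ := extraction_of_frequently_atTop hB
  obtain ⟨w, -, ψ, hψ, hw⟩ := (isCompact_closedBall b B).tendsto_subseq
    fun k => Metric.mem_closedBall'.2 (hφB k).le
  exact hh.2 w (hy.eq_horo_of_tendsto (hφ.comp hψ).tendsto_atTop hw)

lemma IsGeodesicSpace.exists_dist_eq (hX : IsGeodesicSpace X) (x y : X) {t : ℝ} (ht₀ : 0 ≤ t)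
    (ht : t ≤ dist x y) : ∃ z, dist x z = t ∧ dist z y = dist x y - t := by
  obtain ⟨γ, hγ₀, hγ₁, hγ⟩ := hX x y
  refine ⟨γ t, ?_, ?_⟩
  · simpa [hγ₀, abs_of_nonneg ht₀] using hγ 0 ⟨le_rfl, dist_nonneg⟩ t ⟨ht₀, ht⟩
  · simpa [hγ₁, abs_of_nonpos (sub_nonpos.2 ht)] using
      hγ t ⟨ht₀, ht⟩ (dist x y) ⟨dist_nonneg, le_rfl⟩

lemma HoroLim.exists_le_neg [ProperSpace X] (hX : IsGeodesicSpace X) {b : X} {v : ℕ → X}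
    {g : X → ℝ} (hv : HoroLim b v g) (hd : Tendsto (fun n => dist b (v n)) atTop atTop)
    {t : ℝ} (ht : 0 ≤ t) : ∃ w, g w ≤ -t := by
  have hgeod : ∀ᶠ n in atTop, ∃ z, dist b z = t ∧ horo b (v n) z = -t := by
    filter_upwards [hd.eventually_ge_atTop t] with n hn
    obtain ⟨z, hbz, hzv⟩ := hX.exists_dist_eq b (v n) ht hn
    exact ⟨z, hbz, by rw [horo, hzv]; ring⟩
  obtain ⟨N, hN⟩ := eventually_atTop.1 hgeod
  choose z hbz hz using fun k => hN (k + N) (Nat.le_add_left N k)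
  obtain ⟨w, -, ψ, hψ, hw⟩ := (isCompact_closedBall b t).tendsto_subseq
    fun k => Metric.mem_closedBall'.2 (hbz k).le
  have hlim : Tendsto (fun k => -t + dist w (z (ψ k))) atTop (𝓝 (-t)) := by
    simpa using (tendsto_const_nhds (x := -t)).add ((tendsto_const_nhds (x := w)).dist hw)
  have hsub : Tendsto (fun k => ψ k + N) atTop atTop :=
    (tendsto_add_atTop_nat N).comp hψ.tendsto_atTop
  refine ⟨w, le_of_tendsto_of_tendsto ((hv w).comp hsub) hlim (Eventually.of_forall fun k => ?_)⟩
  simpa [hz] using horo_le_horo_add_dist b (v (ψ k + N)) w (z (ψ k))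

lemma HoroLim.isHorofunction_s3 [ProperSpace X] (hX : IsGeodesicSpace X) {b : X} {v : ℕ → X}
    {g : X → ℝ} (hv : HoroLim b v g) (hd : Tendsto (fun n => dist b (v n)) atTop atTop) :
    IsHorofunction b g := by
  refine ⟨⟨v, hv⟩, fun w hw => ?_⟩
  obtain ⟨z, hz⟩ := hv.exists_le_neg hX hd (t := dist b w + 1) (by positivity)
  have := neg_dist_le_horo b w z
  rw [hw] at hz
  linarith

end Horo

lemma cauchySeq_of_dense_of_lipschitzWith {X Y : Type*} [PseudoMetricSpace X]
    [PseudoMetricSpace Y] {f : ℕ → X → Y} (hf : ∀ n, LipschitzWith 1 (f n)) {s : Set X}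
    (hs : Dense s) (hcs : ∀ w ∈ s, CauchySeq (f · w)) (z : X) : CauchySeq (f · z) := by
  rw [Metric.cauchySeq_iff']
  intro ε hε
  obtain ⟨w, hws, hzw⟩ := Metric.mem_closure_iff.1 (hs z) (ε / 3) (by positivity)
  obtain ⟨N, hN⟩ := Metric.cauchySeq_iff'.1 (hcs w hws) (ε / 3) (by positivity)
  have hclose : ∀ n, dist (f n z) (f n w) < ε / 3 := fun n =>
    ((hf n).dist_le_mul z w).trans_lt (by simpa using hzw)
  refine ⟨N, fun n hn => ?_⟩
  calc dist (f n z) (f N z) ≤ dist (f n z) (f n w) + dist (f n w) (f N w) + dist (f N w) (f N z) :=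
        dist_triangle4 _ _ _ _
    _ < ε / 3 + ε / 3 + ε / 3 := by
        gcongr
        · exact hclose n
        · exact hN n hn
        · rw [dist_comm]; exact hclose N
    _ = ε := by ring

lemma exists_strictMono_tendsto_ereal {ι : Type*} [Countable ι] (u : ℕ → ι → EReal) :
    ∃ σ : ℕ → ℕ, StrictMono σ ∧ ∃ L : ι → EReal,
      ∀ i, Tendsto (fun k => u (σ k) i) atTop (𝓝 (L i)) := by
  obtain ⟨L, -, σ, hσ, hL⟩ := isCompact_univ.tendsto_subseq (x := u) fun _ => Set.mem_univ _
  exact ⟨σ, hσ, L, tendsto_pi_nhds.1 hL⟩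

lemma tendsto_toReal_of_tendsto_coe {α : Type*} {l : Filter α} {u : α → ℝ} {L : EReal}
    (hu : Tendsto (fun n => (u n : EReal)) l (𝓝 L)) (hL₁ : L ≠ ⊤) (hL₂ : L ≠ ⊥) :
    Tendsto u l (𝓝 L.toReal) := by
  lift L to ℝ using ⟨hL₁, hL₂⟩
  exact EReal.tendsto_coe.1 hu

lemma exists_tendsto_of_tendsto_coe_of_abs_le {α : Type*} {l : Filter α} [l.NeBot] {u : α → ℝ}
    {L : EReal} {C : ℝ} (hu : Tendsto (fun n => (u n : EReal)) l (𝓝 L))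
    (hC : ∀ n, |u n| ≤ C) : ∃ c, Tendsto u l (𝓝 c) := by
  have hL₁ : L ≤ C := le_of_tendsto' hu fun n => EReal.coe_le_coe_iff.2 (abs_le.1 (hC n)).2
  have hL₂ : ((-C : ℝ) : EReal) ≤ L :=
    ge_of_tendsto' hu fun n => EReal.coe_le_coe_iff.2 (abs_le.1 (hC n)).1
  exact ⟨_, tendsto_toReal_of_tendsto_coe hu (ne_top_of_le_ne_top (EReal.coe_ne_top C) hL₁)
    (ne_bot_of_le_ne_bot (EReal.coe_ne_bot _) hL₂)⟩

theorem exists_strictMono_forall_horoLim {ι : Type*} [Countable ι] {X : ι → Type*}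
    [∀ i, MetricSpace (X i)] [∀ i, TopologicalSpace.SeparableSpace (X i)]
    (b : ∀ i, X i) (y : ℕ → ∀ i, X i) :
    ∃ σ : ℕ → ℕ, StrictMono σ ∧ ∃ g : ∀ i, X i → ℝ,
      ∀ i, HoroLim (b i) (fun k => y (σ k) i) (g i) := by
  choose s hsc hsd using fun i => TopologicalSpace.exists_countable_dense (X i)
  have := fun i => (hsc i).to_subtype
  obtain ⟨σ, hσ, L, hL⟩ := exists_strictMono_tendsto_ereal
    fun n (w : Σ i, s i) => ((horo (b w.1) (y n w.1) w.2 : ℝ) : EReal)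
  have hdense : ∀ i, ∀ w ∈ s i, CauchySeq fun k => horo (b i) (y (σ k) i) w := fun i w hw =>
    (exists_tendsto_of_tendsto_coe_of_abs_le (hL ⟨i, w, hw⟩)
      fun _ => abs_horo_le _ _ _).choose_spec.cauchySeq
  choose g hg using fun i z => cauchySeq_tendsto_of_complete
    (cauchySeq_of_dense_of_lipschitzWith (fun k => lipschitzWith_horo _ _) (hsd i) (hdense i) z)
  exact ⟨σ, hσ, g, fun i z => hg i z⟩

lemma exists_eq_zero_of_tendsto_coe {ι α : Type*} [Fintype ι] [Nonempty ι] {l : Filter α}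
    [l.NeBot] {r : α → ι → ℝ} (hr₀ : ∀ n i, 0 ≤ r n i) (hr : ∀ n, ∃ i, r n i = 0)
    {L : ι → EReal} (hL : ∀ i, Tendsto (fun n => (r n i : EReal)) l (𝓝 (L i))) :
    ∃ i, L i = 0 := by
  have hinf : ∀ n, Finset.univ.inf' Finset.univ_nonempty (fun i => (r n i : EReal)) = 0 := by
    intro n
    obtain ⟨i, hi⟩ := hr n
    refine le_antisymm ((Finset.inf'_le _ (Finset.mem_univ i)).trans (by simp [hi])) ?_
    exact Finset.le_inf' _ _ fun j _ => EReal.coe_nonneg.2 (hr₀ n j)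
  have hlim := Tendsto.finset_inf'_nhds_apply Finset.univ_nonempty fun i _ => hL i
  simp only [hinf] at hlim
  obtain ⟨i, -, hi⟩ := Finset.exists_mem_eq_inf' Finset.univ_nonempty L
  exact ⟨i, hi.symm.trans (tendsto_nhds_unique hlim tendsto_const_nhds)⟩

lemma tendsto_univ_sup'_of_tendsto_atBot {ι α : Type*} [Fintype ι] [Nonempty ι] {l : Filter α}
    {F : ι → α → ℝ} {s : Finset ι} (hs : s.Nonempty) {a : ι → ℝ}
    (ha : ∀ i ∈ s, Tendsto (F i) l (𝓝 (a i))) (hbot : ∀ i ∉ s, Tendsto (F i) l atBot) :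
    Tendsto (fun x => Finset.univ.sup' Finset.univ_nonempty (F · x)) l (𝓝 (s.sup' hs a)) := by
  obtain ⟨j, hj⟩ := id hs
  have hsmall : ∀ᶠ x in l, ∀ i ∉ s, F i x ≤ F j x := by
    have hj' : ∀ᶠ x in l, a j - 1 < F j x := (ha j hj).eventually (lt_mem_nhds (by linarith))
    have hi' : ∀ᶠ x in l, ∀ i ∉ s, F i x < a j - 1 := by
      refine eventually_all.2 fun i => ?_
      by_cases hi : i ∈ s
      · exact Eventually.of_forall fun _ h => absurd hi h
      · exact ((hbot i hi).eventually_lt_atBot _).mono fun _ h _ => h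
    filter_upwards [hj', hi'] with x hjx hix i hi
    exact ((hix i hi).trans hjx).le
  refine (Tendsto.finset_sup'_nhds_apply hs ha).congr' ?_
  filter_upwards [hsmall] with x hx
  refine le_antisymm (Finset.sup'_mono _ (Finset.subset_univ s) hs)
    (Finset.sup'_le _ _ fun i _ => ?_)
  by_cases hi : i ∈ s
  · exact Finset.le_sup' (F · x) hi
  · exact (hx i hi).trans (Finset.le_sup' (F · x) hj)

section Pi

variable {ι : Type*} [Fintype ι] [Nonempty ι] {X : ι → Type*} [∀ i, MetricSpace (X i)]

lemma dist_pi_eq_sup' (x y : ∀ i, X i) :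
    dist x y = Finset.univ.sup' Finset.univ_nonempty fun i => dist (x i) (y i) := by
  refine le_antisymm
    ((dist_pi_le_iff ?_).2 fun i => Finset.le_sup' (fun i => dist (x i) (y i)) (Finset.mem_univ i))
    (Finset.sup'_le _ _ fun i _ => dist_le_pi_dist x y i)
  obtain ⟨i⟩ := ‹Nonempty ι›
  exact dist_nonneg.trans (Finset.le_sup' (fun i => dist (x i) (y i)) (Finset.mem_univ i))

lemma exists_dist_eq_dist_pi (x y : ∀ i, X i) : ∃ i, dist (x i) (y i) = dist x y := by
  obtain ⟨i, -, hi⟩ := Finset.exists_mem_eq_sup' Finset.univ_nonempty fun i => dist (x i) (y i)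
  exact ⟨i, by rw [dist_pi_eq_sup', hi]⟩

lemma horo_pi_eq_sup' (b y x : ∀ i, X i) :
    horo b y x = Finset.univ.sup' Finset.univ_nonempty
      fun i => horo (b i) (y i) (x i) - (dist b y - dist (b i) (y i)) := by
  rw [horo, dist_pi_eq_sup', Finset.apply_sup'_eq_sup'_comp _ (· - dist b y)
    fun u v => (max_sub_sub_right u v _).symm]
  exact Finset.sup'_congr _ rfl fun i _ => by simp only [Function.comp, horo]; ring

lemma exists_strictMono_tendsto_gap (b : ∀ i, X i) (y : ℕ → ∀ i, X i) :
    ∃ σ : ℕ → ℕ, StrictMono σ ∧ ∃ (J : Finset ι) (α : ι → ℝ), (∀ j ∈ J, 0 ≤ α j) ∧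
      (∃ j ∈ J, α j = 0) ∧
      (∀ j ∈ J, Tendsto (fun k => dist b (y (σ k)) - dist (b j) (y (σ k) j)) atTop (𝓝 (α j))) ∧
      (∀ i ∉ J, Tendsto (fun k => dist b (y (σ k)) - dist (b i) (y (σ k) i)) atTop atTop) := by
  set gap : ℕ → ι → ℝ := fun n j => dist b (y n) - dist (b j) (y n j) with hgap
  obtain ⟨σ, hσ, L, hL⟩ := exists_strictMono_tendsto_ereal fun n j => (gap n j : EReal)
  have hgap₀ : ∀ k j, 0 ≤ gap (σ k) j := fun k j => sub_nonneg.2 (dist_le_pi_dist _ _ j)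
  have hL₀ : ∀ j, 0 ≤ L j := fun j =>
    ge_of_tendsto' (hL j) fun k => EReal.coe_nonneg.2 (hgap₀ k j)
  obtain ⟨j₀, hj₀⟩ := exists_eq_zero_of_tendsto_coe hgap₀
    (fun k => (exists_dist_eq_dist_pi b (y (σ k))).imp fun j hj => by simp [hgap, hj]) hL
  refine ⟨σ, hσ, Finset.univ.filter fun j => L j ≠ ⊤, fun j => (L j).toReal,
    fun j _ => EReal.toReal_nonneg (hL₀ j), ⟨j₀, by simp [hj₀]⟩, fun j hj => ?_, fun i hi => ?_⟩
  · exact tendsto_toReal_of_tendsto_coe (hL j) (by simpa using hj)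
      (ne_bot_of_le_ne_bot EReal.zero_ne_bot (hL₀ j))
  · simp only [Finset.mem_filter, Finset.mem_univ, true_and, not_not] at hi
    exact EReal.tendsto_coe_nhds_top_iff.1 (hi ▸ hL i)

lemma HoroLim.pi_sup' {b : ∀ i, X i} {y : ℕ → ∀ i, X i} {J : Finset ι} (hJ : J.Nonempty)
    {g : ∀ i, X i → ℝ} {α : ι → ℝ} (hg : ∀ j ∈ J, HoroLim (b j) (fun n => y n j) (g j))
    (hα : ∀ j ∈ J, Tendsto (fun n => dist b (y n) - dist (b j) (y n j)) atTop (𝓝 (α j)))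
    (htop : ∀ i ∉ J, Tendsto (fun n => dist b (y n) - dist (b i) (y n i)) atTop atTop) :
    HoroLim b y fun x => J.sup' hJ fun j => g j (x j) - α j := by
  intro x
  simp only [horo_pi_eq_sup' b _ x]
  refine tendsto_univ_sup'_of_tendsto_atBot hJ (fun j hj => (hg j hj (x j)).sub (hα j hj))
    fun i hi => tendsto_atBot_mono (fun n => ?_)
      (tendsto_atBot_add_const_left _ (dist (b i) (x i)) (tendsto_neg_atTop_atBot.comp (htop i hi)))
  have := abs_horo_le (b i) (y n i) (x i)
  simp only [Function.comp]
  linarith [le_abs_self (horo (b i) (y n i) (x i))]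

end Pi

/-- structure of horofunctions of a product of proper geodesic metric spaces. -/
theorem stmt_3 (p : ℕ) (M : Fin p → Type*) [∀ j, MetricSpace (M j)] [∀ j, ProperSpace (M j)]
    (hgeo : ∀ j, IsGeodesicSpace (M j))
    (b : ∀ j, M j) (h : (∀ j, M j) → ℝ) (hh : IsHorofunction b h)
    (y : ℕ → ∀ j, M j) (hy : HoroLim b y h) :
    ∃ (J : Finset (Fin p)) (hJ : J.Nonempty) (hs : ∀ j, M j → ℝ) (α : Fin p → ℝ)
      (σ : ℕ → ℕ), StrictMono σ ∧
      (∀ j ∈ J, IsHorofunction (b j) (hs j)) ∧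
      (∀ j ∈ J, 0 ≤ α j) ∧ (∃ j ∈ J, α j = 0) ∧
      (∀ j ∈ J, Filter.Tendsto
        (fun k => dist b (y (σ k)) - dist (b j) (y (σ k) j)) Filter.atTop (nhds (α j))) ∧
      (∀ i ∉ J, Filter.Tendsto
        (fun k => dist b (y (σ k)) - dist (b i) (y (σ k) i)) Filter.atTop Filter.atTop) ∧
      (∀ j ∈ J, ∀ z : M j, Filter.Tendsto
        (fun k => horo (b j) (y (σ k) j) z) Filter.atTop (nhds (hs j z))) ∧
      (∀ x : ∀ j, M j, h x = J.sup' hJ fun j => hs j (x j) - α j) := by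
  have : Nonempty (Fin p) := by
    by_contra hp
    have := not_nonempty_iff.1 hp
    exact not_nontrivial _ hh.nontrivial
  obtain ⟨σ₁, hσ₁, hs, hhs⟩ := exists_strictMono_forall_horoLim b y
  obtain ⟨σ₂, hσ₂, J, α, hα₀, ⟨j₀, hj₀, hαj₀⟩, hα, htop⟩ := exists_strictMono_tendsto_gap b (y ∘ σ₁)
  have hσ : Tendsto (σ₁ ∘ σ₂) atTop atTop := (hσ₁.comp hσ₂).tendsto_atTop
  have hhsσ : ∀ j, HoroLim (b j) (fun k => y (σ₁ (σ₂ k)) j) (hs j) := fun j =>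
    (hhs j).comp hσ₂.tendsto_atTop
  have hdist : ∀ j ∈ J, Tendsto (fun k => dist (b j) (y (σ₁ (σ₂ k)) j)) atTop atTop :=
    fun j hj => (((hh.tendsto_dist_atTop hy).comp hσ).atTop_add (hα j hj).neg).congr
      fun k => by simp
  refine ⟨J, ⟨j₀, hj₀⟩, hs, α, σ₁ ∘ σ₂, hσ₁.comp hσ₂,
    fun j hj => (hhsσ j).isHorofunction_s3 (hgeo j) (hdist j hj), hα₀, ⟨j₀, hj₀, hαj₀⟩, hα, htop,
    fun j _ => hhsσ j, fun x => ?_⟩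
  exact tendsto_nhds_unique (hy.comp hσ x) (HoroLim.pi_sup' ⟨j₀, hj₀⟩ (fun j _ => hhsσ j) hα htop x)
end
end

section
/- Let (y^n) be an almost geodesic sequence in a geodesic metric space (M,d) with d(y^n,y^0) < d(y^{n+1},y^0) for all n ≥ 0, such that h_{y^n} → h pointwise (with basepoint y^0) for some function h : M → ℝ. Then every ray γ̄ : [0,∞) → M induced by (y^n) is an almost geodesic ray, and h_{γ̄(t)} → h pointwise as t → ∞. -/
open Filter Topology

noncomputable section

/-- Almost geodesic ray. -/
def IsAlmostGeodesicRay {M : Type*} [MetricSpace M] (γ : ℝ → M) : Prop :=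
  Filter.Tendsto (fun t => dist (γ t) (γ 0)) Filter.atTop Filter.atTop ∧
  ∀ ε > (0 : ℝ), ∃ T : ℝ, 0 ≤ T ∧ ∀ s t : ℝ, T ≤ s → s ≤ t →
    dist (γ t) (γ s) + dist (γ s) (γ 0) - dist (γ t) (γ 0) < ε

/-- `γbar` is a ray induced by the sequence `y` : it is obtained by concatenating
affine reparametrisations of geodesic paths `γ n` joining `y n` to `y (n+1)`,
where `γbar` is parametrised so that `γbar (dist (y n) (y 0)) = y n`. -/
def IsInducedRay {M : Type*} [MetricSpace M] (y : ℕ → M) (γbar : ℝ → M) : Prop :=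
  ∃ γ : ℕ → ℝ → M,
    (∀ n, γ n 0 = y n) ∧
    (∀ n, γ n (dist (y (n+1)) (y n)) = y (n+1)) ∧
    (∀ n, ∀ s ∈ Set.Icc (0 : ℝ) (dist (y (n+1)) (y n)),
      ∀ t ∈ Set.Icc (0 : ℝ) (dist (y (n+1)) (y n)), dist (γ n s) (γ n t) = |s - t|) ∧
    (∀ n, ∀ t ∈ Set.Icc (dist (y n) (y 0)) (dist (y (n+1)) (y 0)),
      γbar t = γ n (dist (y (n+1)) (y n) /
        (dist (y (n+1)) (y 0) - dist (y n) (y 0)) * (t - dist (y n) (y 0))))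


private lemma seg_key {M : Type*} [MetricSpace M] {p q b : M} {γ : ℝ → M}
    (hγ0 : γ 0 = p) (hγ1 : γ (dist q p) = q)
    (hgeod : ∀ s ∈ Set.Icc (0:ℝ) (dist q p), ∀ t ∈ Set.Icc (0:ℝ) (dist q p),
      dist (γ s) (γ t) = |s - t|)
    (hab : dist p b < dist q b) {t : ℝ}
    (ht : t ∈ Set.Icc (dist p b) (dist q b)) :
    dist (γ (dist q p / (dist q b - dist p b) * (t - dist p b))) p
        ≤ t - dist p b + (dist q p + dist p b - dist q b) ∧
    dist (γ (dist q p / (dist q b - dist p b) * (t - dist p b))) q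
        ≤ dist q b - t + (dist q p + dist p b - dist q b) := by
  have hΔ : 0 < dist q b - dist p b := sub_pos.2 hab
  have hE : dist q b ≤ dist q p + dist p b := dist_triangle q p b
  set c := dist q p / (dist q b - dist p b) with hc
  have hcΔ : c * (dist q b - dist p b) = dist q p := div_mul_cancel₀ _ hΔ.ne'
  have hc1 : 1 ≤ c := by rw [hc, le_div_iff₀ hΔ]; linarith
  set u := c * (t - dist p b) with hu
  have htd : 0 ≤ t - dist p b := by linarith [ht.1]
  have htd2 : t - dist p b ≤ dist q b - dist p b := by linarith [ht.2]
  have hu0 : 0 ≤ u := mul_nonneg (by linarith) htd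
  have huup : u ≤ dist q p := by
    calc u ≤ c * (dist q b - dist p b) := mul_le_mul_of_nonneg_left htd2 (by linarith)
    _ = dist q p := hcΔ
  have hult : t - dist p b ≤ u := by nlinarith
  have huub : u ≤ t - dist p b + (dist q p + dist p b - dist q b) := by
    nlinarith [mul_le_mul_of_nonneg_left htd2 (sub_nonneg.2 hc1)]
  have h1 : dist (γ u) p = u := by
    rw [← hγ0, hgeod u ⟨hu0, huup⟩ 0 ⟨le_refl _, dist_nonneg⟩, sub_zero, abs_of_nonneg hu0]
  have h2 : dist (γ u) q = dist q p - u := by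
    conv_lhs => rw [← hγ1]
    rw [hgeod u ⟨hu0, huup⟩ (dist q p) ⟨dist_nonneg, le_refl _⟩,
      abs_of_nonpos (by linarith), neg_sub]
  exact ⟨by rw [h1]; exact huub, by rw [h2]; linarith⟩

private lemma seg_key2 {M : Type*} [MetricSpace M] {p q b : M} {γ : ℝ → M}
    (hgeod : ∀ s ∈ Set.Icc (0:ℝ) (dist q p), ∀ t ∈ Set.Icc (0:ℝ) (dist q p),
      dist (γ s) (γ t) = |s - t|)
    (hab : dist p b < dist q b) {s t : ℝ}
    (hs : s ∈ Set.Icc (dist p b) (dist q b)) (ht : t ∈ Set.Icc (dist p b) (dist q b))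
    (hst : s ≤ t) :
    dist (γ (dist q p / (dist q b - dist p b) * (t - dist p b)))
        (γ (dist q p / (dist q b - dist p b) * (s - dist p b)))
      ≤ t - s + (dist q p + dist p b - dist q b) := by
  have hΔ : 0 < dist q b - dist p b := sub_pos.2 hab
  set c := dist q p / (dist q b - dist p b) with hc
  have hcΔ : c * (dist q b - dist p b) = dist q p := div_mul_cancel₀ _ hΔ.ne'
  have hc1 : 1 ≤ c := by rw [hc, le_div_iff₀ hΔ]; nlinarith [dist_triangle q p b]
  have hmem : ∀ r : ℝ, r ∈ Set.Icc (dist p b) (dist q b) →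
      c * (r - dist p b) ∈ Set.Icc (0:ℝ) (dist q p) := by
    intro r hr
    constructor
    · exact mul_nonneg (by linarith) (by linarith [hr.1])
    · calc c * (r - dist p b) ≤ c * (dist q b - dist p b) :=
          mul_le_mul_of_nonneg_left (by linarith [hr.2]) (by linarith)
      _ = dist q p := hcΔ
  rw [hgeod _ (hmem t ht) _ (hmem s hs)]
  have heq : c * (t - dist p b) - c * (s - dist p b) = c * (t - s) := by ring
  rw [heq, abs_of_nonneg (mul_nonneg (by linarith) (by linarith))]
  nlinarith [mul_le_mul_of_nonneg_left (show t - s ≤ dist q b - dist p b by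
    linarith [ht.2, hs.1]) (sub_nonneg.2 hc1)]

/-- an induced ray is an almost geodesic ray converging to the same horofunction. -/
theorem stmt_4 (M : Type*) [MetricSpace M] (hgeo : IsGeodesicSpace M)
    (y : ℕ → M) (hy : IsAlmostGeodesicSeq y)
    (hincr : ∀ n : ℕ, dist (y n) (y 0) < dist (y (n+1)) (y 0))
    (h : M → ℝ) (hconv : HoroLim (y 0) y h)
    (γbar : ℝ → M) (hray : IsInducedRay y γbar) :
    IsAlmostGeodesicRay γbar ∧
      ∀ z : M, Filter.Tendsto (fun t => horo (y 0) (γbar t) z) Filter.atTop (nhds (h z)) := by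
  obtain ⟨hytop, hyag⟩ := hy
  obtain ⟨γ, hγ0, hγ1, hgeod, hglue⟩ := hray
  have hγbar0 : γbar 0 = y 0 := by
    have h01 : (0:ℝ) ∈ Set.Icc (dist (y 0) (y 0)) (dist (y 1) (y 0)) :=
      ⟨by simp, dist_nonneg⟩
    rw [hglue 0 0 h01]
    simp [dist_self, hγ0]
  have select : ∀ N : ℕ, ∀ t : ℝ, dist (y N) (y 0) ≤ t →
      ∃ n, N ≤ n ∧ t ∈ Set.Icc (dist (y n) (y 0)) (dist (y (n+1)) (y 0)) := by
    intro N t hNt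
    have hex : ∃ n, t < dist (y n) (y 0) :=
      (Filter.Tendsto.eventually hytop (eventually_gt_atTop t)).exists
    have hn0 := Nat.find_spec hex
    have hpos : Nat.find hex ≠ 0 := by
      intro h0
      rw [h0] at hn0
      have h1 : (0:ℝ) ≤ t := le_trans dist_nonneg hNt
      simp [dist_self] at hn0
      linarith
    obtain ⟨n, hn⟩ := Nat.exists_eq_succ_of_ne_zero hpos
    rw [hn] at hn0
    have hle : dist (y n) (y 0) ≤ t := by
      by_contra hcon
      push_neg at hcon
      have := Nat.find_min' hex hcon
      omega
    refine ⟨n, ?_, hle, le_of_lt hn0⟩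
    by_contra hcon
    push_neg at hcon
    have hmono : ∀ a b : ℕ, a ≤ b → dist (y a) (y 0) ≤ dist (y b) (y 0) := by
      intro a b hab
      induction b with
      | zero => simp_all
      | succ k ih =>
        rcases Nat.lt_or_ge a (k+1) with hk | hk
        · exact le_trans (ih (by omega)) (le_of_lt (hincr k))
        · have : a = k + 1 := by omega
          simp [this]
    have := hmono (n+1) N hcon
    linarith
  have key : ∀ n : ℕ, ∀ t ∈ Set.Icc (dist (y n) (y 0)) (dist (y (n+1)) (y 0)),
      dist (γbar t) (y n) ≤ t - dist (y n) (y 0)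
          + (dist (y (n+1)) (y n) + dist (y n) (y 0) - dist (y (n+1)) (y 0)) ∧
      dist (γbar t) (y (n+1)) ≤ dist (y (n+1)) (y 0) - t
          + (dist (y (n+1)) (y n) + dist (y n) (y 0) - dist (y (n+1)) (y 0)) ∧
      t - (dist (y (n+1)) (y n) + dist (y n) (y 0) - dist (y (n+1)) (y 0))
          ≤ dist (γbar t) (y 0) ∧
      dist (γbar t) (y 0) ≤ t
          + (dist (y (n+1)) (y n) + dist (y n) (y 0) - dist (y (n+1)) (y 0)) := by
    intro n t ht
    have hs := seg_key (hγ0 n) (hγ1 n) (hgeod n) (hincr n) ht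
    rw [hglue n t ht]
    set x := γ n (dist (y (n+1)) (y n) / (dist (y (n+1)) (y 0) - dist (y n) (y 0))
      * (t - dist (y n) (y 0))) with hx
    have t1 := dist_triangle (y (n+1)) x (y 0)
    have t2 := dist_triangle x (y n) (y 0)
    have c1 := dist_comm x (y (n+1))
    exact ⟨hs.1, hs.2, by linarith [hs.2], by linarith [hs.1]⟩
  have key2 : ∀ n : ℕ, ∀ s ∈ Set.Icc (dist (y n) (y 0)) (dist (y (n+1)) (y 0)),
      ∀ t ∈ Set.Icc (dist (y n) (y 0)) (dist (y (n+1)) (y 0)), s ≤ t →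
      dist (γbar t) (γbar s) ≤ t - s
          + (dist (y (n+1)) (y n) + dist (y n) (y 0) - dist (y (n+1)) (y 0)) := by
    intro n s hsI t htI hst
    rw [hglue n s hsI, hglue n t htI]
    exact seg_key2 (hgeod n) (hincr n) hsI htI hst
  constructor
  · constructor
    · obtain ⟨N₁, hN₁⟩ := hyag 1 one_pos
      have htend : Filter.Tendsto (fun t : ℝ => t - 1) atTop atTop :=
        tendsto_atTop_add_const_right atTop (-1) tendsto_id
      refine tendsto_atTop_mono' atTop ?_ htend
      filter_upwards [eventually_ge_atTop (dist (y N₁) (y 0))] with t ht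
      obtain ⟨n, hn, htI⟩ := select N₁ t ht
      have hE := hN₁ (n+1) n hn (Nat.le_succ n)
      have hk := (key n t htI).2.2.1
      rw [hγbar0]
      linarith
    · intro ε hε
      obtain ⟨N, hN⟩ := hyag (ε/5) (by linarith)
      refine ⟨dist (y N) (y 0), dist_nonneg, ?_⟩
      intro s t hs hst
      obtain ⟨n, hNn, hsI⟩ := select N s hs
      obtain ⟨m, hnm, htI⟩ := select n t (le_trans hsI.1 hst)
      have hen := hN (n+1) n hNn (Nat.le_succ n)
      have hem := hN (m+1) m (hNn.trans hnm) (Nat.le_succ m)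
      have hen0 := dist_triangle (y (n+1)) (y n) (y 0)
      have hem0 := dist_triangle (y (m+1)) (y m) (y 0)
      have hks := key n s hsI
      have hkt := key m t htI
      rw [hγbar0]
      rcases eq_or_lt_of_le hnm with heq | hlt
      · subst heq
        have h2 := key2 n s hsI t htI hst
        linarith [hks.2.2.2, hkt.2.2.1]
      · have hyd := hN m (n+1) (hNn.trans (Nat.le_succ n)) hlt
        have h4 := dist_triangle4 (γbar t) (y m) (y (n+1)) (γbar s)
        have c1 := dist_comm (γbar s) (y (n+1))
        linarith [hkt.1, hks.2.1, hks.2.2.2, hkt.2.2.1]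
  · intro z
    rw [Metric.tendsto_atTop]
    intro ε hε
    obtain ⟨N₁, hN₁⟩ := hyag (ε/4) (by linarith)
    obtain ⟨N₂, hN₂⟩ := Metric.tendsto_atTop.1 (hconv z) (ε/4) (by linarith)
    refine ⟨dist (y (max N₁ N₂)) (y 0), ?_⟩
    intro t ht
    obtain ⟨n, hn, htI⟩ := select (max N₁ N₂) t ht
    obtain ⟨k1, k2, k3, k4⟩ := key n t htI
    have hen := hN₁ (n+1) n (le_trans (le_max_left _ _) hn) (Nat.le_succ n)
    have hen0 := dist_triangle (y (n+1)) (y n) (y 0)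
    have h1 := hN₂ n (le_trans (le_max_right _ _) hn)
    have h2 := hN₂ (n+1) (le_trans (le_max_right _ _) (hn.trans (Nat.le_succ n)))
    simp only [horo, Real.dist_eq] at h1 h2 ⊢
    rw [abs_lt] at h1 h2 ⊢
    have tr1 := dist_triangle z (y n) (γbar t)
    have tr2 := dist_triangle z (γbar t) (y (n+1))
    have cm1 := dist_comm (γbar t) (y n)
    have cm2 := dist_comm (γbar t) (y 0)
    have cm3 := dist_comm (y 0) (y n)
    have cm4 := dist_comm (y 0) (y (n+1))
    have cm5 := dist_comm (y n) (γbar t)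
    constructor
    · linarith [h2.1]
    · linarith [h1.2]
end
end

section
/- Let φ : (M,d) → (N,ρ) be an isometric embedding between proper geodesic metric spaces and let b ∈ M be a basepoint. If (z^n) is an almost geodesic sequence in M, then (φ(z^n)) is an almost geodesic sequence in N, and hence h_{φ(z^n)} (taken with basepoint φ(b)) converges pointwise to a Busemann point of (N,ρ). Moreover, if (z^n) and (w^n) are almost geodesic sequences in M such that h_{z^n} and h_{w^n} converge pointwise to the same Busemann point h of (M,d), then the pointwise limits of h_{φ(z^n)} and h_{φ(w^n)} coincide. -/
open Filter Topology

noncomputable section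

section Aux
variable {X : Type*} [MetricSpace X] (b : X) (y : ℕ → X)

lemma aux_cauchy (hy : IsAlmostGeodesicSeq y) (z : X) :
    CauchySeq (fun n => horo b (y n) z) := by
  have key : ∀ z : X, CauchySeq (fun n => dist z (y n) - dist (y n) (y 0)) := by
    intro z
    rw [Metric.cauchySeq_iff]
    intro ε hε
    obtain ⟨N, hN⟩ := hy.2 (ε/3) (by linarith)
    set f : ℕ → ℝ := fun n => dist z (y n) - dist (y n) (y 0) with hf
    have hlb : ∀ n, -dist z (y 0) ≤ f n := by
      intro n
      have h1 := dist_triangle (y n) z (y 0)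
      have h2 : dist (y n) z = dist z (y n) := dist_comm _ _
      simp only [f]; linarith
    have hqd : ∀ m k, N ≤ k → k ≤ m → f m ≤ f k + ε/3 := by
      intro m k hk hkm
      have h1 := dist_triangle z (y k) (y m)
      have h2 := hN m k hk hkm
      have h3 : dist (y k) (y m) = dist (y m) (y k) := dist_comm _ _
      simp only [f]; linarith
    have hbdd : BddBelow (Set.range fun n => f (n + N)) := by
      refine ⟨-dist z (y 0), ?_⟩
      rintro _ ⟨n, rfl⟩
      exact hlb _
    set I : ℝ := ⨅ n, f (n + N) with hI
    obtain ⟨n1, hn1⟩ := exists_lt_of_ciInf_lt (show I < I + ε/3 by linarith)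
    refine ⟨n1 + N, fun m hm n hn => ?_⟩
    have hIle : ∀ j, N ≤ j → I ≤ f j := by
      intro j hj
      have : f j = f ((j - N) + N) := by congr 1; omega
      rw [this]
      exact ciInf_le hbdd _
    have hub : ∀ j, n1 + N ≤ j → f j < I + 2*(ε/3) := by
      intro j hj
      have := hqd j (n1 + N) (by omega) hj
      linarith
    have h1 := hIle m (by omega)
    have h2 := hIle n (by omega)
    have h3 := hub m hm
    have h4 := hub n hn
    simp only [hf] at h1 h2 h3 h4
    rw [Real.dist_eq, abs_lt]
    constructor <;> linarith
  have heq : (fun n => horo b (y n) z) =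
      (fun n => dist z (y n) - dist (y n) (y 0)) + -(fun n => dist b (y n) - dist (y n) (y 0)) := by
    funext n
    simp only [Pi.add_apply, Pi.neg_apply, horo]
    ring
  rw [heq]
  exact (key z).add (key b).neg

lemma aux_exists_horoLim (hy : IsAlmostGeodesicSeq y) : ∃ h : X → ℝ, HoroLim b y h := by
  have := fun z => cauchySeq_tendsto_of_complete (aux_cauchy b y hy z)
  exact ⟨fun z => (this z).choose, fun z => (this z).choose_spec⟩

lemma aux_seq_bound (hy : IsAlmostGeodesicSeq y) (h : X → ℝ) (hh : HoroLim b y h) :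
    Tendsto (fun k => dist (y k) (y 0) + h (y k)) atTop (𝓝 (h (y 0))) := by
  rw [Metric.tendsto_atTop]
  intro ε hε
  obtain ⟨N, hN⟩ := hy.2 (ε/2) (by linarith)
  refine ⟨N, fun k hk => ?_⟩
  have hup : h (y k) ≤ h (y 0) - dist (y k) (y 0) + ε/2 := by
    refine le_of_tendsto_of_tendsto (hh (y k))
      (((hh (y 0)).sub_const (dist (y k) (y 0))).add_const (ε/2)) ?_
    filter_upwards [eventually_ge_atTop k] with m hm
    have h2 := hN m k hk hm
    have h3 : dist (y k) (y m) = dist (y m) (y k) := dist_comm _ _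
    have h4 : dist (y 0) (y m) = dist (y m) (y 0) := dist_comm _ _
    simp only [horo]; linarith
  have hlo : h (y 0) - dist (y k) (y 0) ≤ h (y k) := by
    refine le_of_tendsto_of_tendsto ((hh (y 0)).sub_const (dist (y k) (y 0))) (hh (y k)) ?_
    filter_upwards with m
    have h1 := dist_triangle (y 0) (y k) (y m)
    have h3 : dist (y 0) (y k) = dist (y k) (y 0) := dist_comm _ _
    simp only [horo]; linarith
  rw [Real.dist_eq, abs_lt]
  constructor <;> linarith

lemma aux_tendsto_zero (hy : IsAlmostGeodesicSeq y) (h : X → ℝ) (hh : HoroLim b y h) :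
    Tendsto (fun k => dist b (y k) + h (y k)) atTop (𝓝 0) := by
  have h1 := aux_seq_bound b y hy h hh
  have h2 : Tendsto (fun k => dist b (y k) - dist (y k) (y 0)) atTop (𝓝 (-h (y 0))) := by
    have := (hh (y 0)).neg
    have heq : (fun n => -horo b (y n) (y 0)) =
        fun k => dist b (y k) - dist (y k) (y 0) := by
      funext n; simp [horo, dist_comm]
    rwa [heq] at this
  have := h1.add h2
  have heq : (fun k => (dist (y k) (y 0) + h (y k)) + (dist b (y k) - dist (y k) (y 0))) =
      fun k => dist b (y k) + h (y k) := by funext k; ring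
  rw [heq] at this
  simpa using this

lemma aux_not_internal (hy : IsAlmostGeodesicSeq y) (h : X → ℝ) (hh : HoroLim b y h) :
    ∀ y' : X, h ≠ horo b y' := by
  intro y' hcontra
  subst hcontra
  have hα := aux_tendsto_zero b y hy _ hh
  have h1 : ∀ᶠ k in atTop, dist b (y k) + horo b y' (y k) < 1 :=
    hα.eventually_lt_const (by norm_num)
  have h2 : ∀ᶠ k in atTop, dist b (y 0) + dist b y' + 1 ≤ dist (y k) (y 0) :=
    hy.1.eventually_ge_atTop _
  obtain ⟨k, hk1, hk2⟩ := (h1.and h2).exists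
  have t1 := dist_triangle (y k) b (y 0)
  have t2 := dist_triangle b y' (y k)
  have hc2 : dist y' (y k) = dist (y k) y' := dist_comm _ _
  have hc : dist (y k) b = dist b (y k) := dist_comm _ _
  simp only [horo] at hk1
  linarith

end Aux

/-- isometric embeddings map almost geodesics to almost geodesics, and induce
a well-defined map on Busemann points. -/
theorem stmt_7 (M N : Type*) [MetricSpace M] [MetricSpace N]
    [ProperSpace M] [ProperSpace N]
    (hM : IsGeodesicSpace M) (hN : IsGeodesicSpace N)
    (φ : M → N) (hφ : Isometry φ) (b : M) :
    (∀ z : ℕ → M, IsAlmostGeodesicSeq z →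
      IsAlmostGeodesicSeq (fun n => φ (z n)) ∧
      ∃ g : N → ℝ, HoroLim (φ b) (fun n => φ (z n)) g ∧ IsBusemannPoint (φ b) g) ∧
    (∀ (z w : ℕ → M) (h : M → ℝ) (g g' : N → ℝ),
      IsAlmostGeodesicSeq z → IsAlmostGeodesicSeq w → IsBusemannPoint b h →
      HoroLim b z h → HoroLim b w h →
      HoroLim (φ b) (fun n => φ (z n)) g → HoroLim (φ b) (fun n => φ (w n)) g' →
      g = g') := by
  have himg : ∀ z : ℕ → M, IsAlmostGeodesicSeq z → IsAlmostGeodesicSeq (fun n => φ (z n)) := by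
    intro z hz
    constructor
    · simpa only [hφ.dist_eq] using hz.1
    · simpa only [hφ.dist_eq] using hz.2
  constructor
  · intro z hz
    have hz' := himg z hz
    obtain ⟨g, hg⟩ := aux_exists_horoLim (φ b) (fun n => φ (z n)) hz'
    exact ⟨hz', g, hg, ⟨⟨_, hg⟩, aux_not_internal (φ b) _ hz' g hg⟩,
      _, hz', hg⟩
  · intro z w h g g' hz hw _hB hzh hwh hzg hwg
    have main : ∀ (z w : ℕ → M) (g g' : N → ℝ), IsAlmostGeodesicSeq w →
        HoroLim b z h → HoroLim b w h →
        HoroLim (φ b) (fun n => φ (z n)) g → HoroLim (φ b) (fun n => φ (w n)) g' →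
        ∀ ζ : N, g ζ ≤ g' ζ := by
      intro z w g g' hw hzh hwh hzg hwg ζ
      have step1 : ∀ n, g ζ ≤ dist ζ (φ (w n)) + h (w n) := by
        intro n
        refine le_of_tendsto_of_tendsto' (hzg ζ) (tendsto_const_nhds.add (hzh (w n))) ?_
        intro m
        have t1 := dist_triangle ζ (φ (w n)) (φ (z m))
        have e1 : dist (φ b) (φ (z m)) = dist b (z m) := hφ.dist_eq _ _
        have e2 : dist (φ (w n)) (φ (z m)) = dist (w n) (z m) := hφ.dist_eq _ _
        simp only [horo]
        linarith
      have step2 : Tendsto (fun n => dist ζ (φ (w n)) + h (w n)) atTop (𝓝 (g' ζ)) := by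
        have hA : Tendsto (fun n => horo (φ b) (φ (w n)) ζ) atTop (𝓝 (g' ζ)) := hwg ζ
        have hZ : Tendsto (fun n => dist b (w n) + h (w n)) atTop (𝓝 0) :=
          aux_tendsto_zero b w hw h hwh
        have hsum := hA.add hZ
        have heq : (fun n => horo (φ b) (φ (w n)) ζ + (dist b (w n) + h (w n))) =
            fun n => dist ζ (φ (w n)) + h (w n) := by
          funext n
          have e1 : dist (φ b) (φ (w n)) = dist b (w n) := hφ.dist_eq _ _
          simp only [horo]
          linarith
        rw [heq] at hsum
        simpa using hsum
      exact ge_of_tendsto' step2 step1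
    funext ζ
    exact le_antisymm (main z w g g' hw hzh hwh hzg hwg ζ)
      (main w z g' g hz hwh hzh hwg hzg ζ)
end
end

section
/- Let φ : (M,d) → (N,ρ) be an isometric embedding between proper geodesic metric spaces with basepoint b ∈ M. Let h and h' be Busemann points of (M,d), let (z^n) and (w^n) be almost geodesic sequences with h_{z^n} → h and h_{w^n} → h' pointwise, and let g and g' be the Busemann points of (N,ρ) with basepoint φ(b) obtained as the pointwise limits of h_{φ(z^n)} and h_{φ(w^n)} respectively. Then δ(h,h') = δ(g,g'); in particular, if δ(h,h') < ∞ then δ(g,g') < ∞, so the induced map on Busemann points sends the part P(h) into the part P(g). -/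
/-! A Busemann point `h` with almost geodesic sequence `(z n)` satisfies `d(b, z n) + h (z n) → 0`,
so among all sequences converging to `h` the sequence `(z n)` itself realises the detour cost
`H(h, h')`: any other sequence `z'` has `liminf (d(b, z' n) + h' (z' n)) ≥ h' x - h x` for every
`x`, by the 1-Lipschitz property of `h'`. Hence `H(h, h')` depends only on the distances
`d(b, z n)` and the values `h' (z n)`, which an isometric embedding `φ` preserves, since
`g ∘ φ = h` and `g' ∘ φ = h'`. -/

open Filter Topology

noncomputable section

namespace HoroLim

variable {M : Type*} [MetricSpace M] {b : M} {y : ℕ → M} {h : M → ℝ}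

lemma unique {h' : M → ℝ} (hh : HoroLim b y h) (hh' : HoroLim b y h') : h = h' :=
  funext fun x => tendsto_nhds_unique (hh x) (hh' x)

lemma lipschitzWith_one (hy : HoroLim b y h) : LipschitzWith 1 h :=
  LipschitzWith.of_le_add fun x x' =>
    le_of_tendsto_of_tendsto' (hy x) ((hy x').add tendsto_const_nhds) fun n => by
      simp only [horo]
      linarith [dist_triangle x x' (y n)]

lemma apply_basepoint (hy : HoroLim b y h) : h b = 0 :=
  tendsto_nhds_unique (hy b) (by simp [horo])

lemma dist_add_nonneg (hy : HoroLim b y h) (x : M) : 0 ≤ dist b x + h x := by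
  have := hy.lipschitzWith_one.le_add_mul b x
  rw [hy.apply_basepoint] at this
  push_cast at this
  linarith

lemma comp_isometry {N : Type*} [MetricSpace N] {φ : M → N} (hφ : Isometry φ) {g : N → ℝ}
    (hg : HoroLim (φ b) (fun n => φ (y n)) g) : HoroLim b y (g ∘ φ) := fun x => by
  simpa only [horo, hφ.dist_eq, Function.comp_apply] using hg (φ x)

end HoroLim

lemma IsAlmostGeodesicSeq.comp_isometry {M N : Type*} [MetricSpace M] [MetricSpace N]
    {z : ℕ → M} (hz : IsAlmostGeodesicSeq z) {φ : M → N} (hφ : Isometry φ) :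
    IsAlmostGeodesicSeq (fun n => φ (z n)) := by
  simpa only [IsAlmostGeodesicSeq, hφ.dist_eq] using hz

lemma IsAlmostGeodesicSeq.tendsto_dist_add {M : Type*} [MetricSpace M] {b : M} {z : ℕ → M}
    {h : M → ℝ} (hz : IsAlmostGeodesicSeq z) (hzh : HoroLim b z h) :
    Tendsto (fun k => dist b (z k) + h (z k)) atTop (𝓝 0) := by
  refine tendsto_order.2 ⟨fun c hc => .of_forall fun k => hc.trans_le (hzh.dist_add_nonneg _),
    fun c hc => ?_⟩
  obtain ⟨N, hN⟩ := hz.2 (c / 2) (half_pos hc)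
  have hr : Tendsto (fun k => h (z 0) - horo b (z k) (z 0)) atTop (𝓝 0) := by
    simpa using (hzh (z 0)).const_sub (h (z 0))
  filter_upwards [hr.eventually_lt_const (half_pos hc), eventually_ge_atTop N] with k hk hkN
  -- Let `m → ∞` in the almost geodesic inequality for `z 0, z k, z m`.
  have hbound : dist b (z k) + h (z k) ≤ h (z 0) - horo b (z k) (z 0) + c / 2 := by
    refine le_of_tendsto_of_tendsto (tendsto_const_nhds.add (hzh (z k)))
      ((((hzh (z 0)).sub tendsto_const_nhds).add tendsto_const_nhds)) ?_
    filter_upwards [eventually_ge_atTop k] with m hkm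
    have := hN m k hkN hkm
    simp only [horo, dist_comm (z 0), dist_comm (z k) (z m)]
    linarith
  linarith

section DetourCost

variable {M : Type*} [MetricSpace M] {b : M} {h₁ h₂ : M → ℝ}

lemma sub_le_liminf_dist_add {z : ℕ → M} (hz : HoroLim b z h₁) (hlip : LipschitzWith 1 h₂)
    (x : M) :
    ((h₂ x - h₁ x : ℝ) : EReal) ≤
      liminf (fun n => ((dist b (z n) + h₂ (z n) : ℝ) : EReal)) atTop := by
  have hlim : Tendsto (fun n => ((h₂ x - horo b (z n) x : ℝ) : EReal)) atTop
      (𝓝 ((h₂ x - h₁ x : ℝ) : EReal)) :=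
    (continuous_coe_real_ereal.tendsto _).comp (tendsto_const_nhds.sub (hz x))
  rw [← hlim.liminf_eq]
  refine liminf_le_liminf (.of_forall fun n => EReal.coe_le_coe_iff.2 ?_)
  have := hlip.le_add_mul x (z n)
  push_cast at this
  simp only [horo]
  linarith

theorem detourCost_eq_liminf {z : ℕ → M} (hz : IsAlmostGeodesicSeq z) (hzh : HoroLim b z h₁)
    (hlip : LipschitzWith 1 h₂) :
    detourCost b h₁ h₂ =
      liminf (fun n => ((dist b (z n) + h₂ (z n) : ℝ) : EReal)) atTop := by
  refine le_antisymm (iInf_le_of_le ⟨z, hzh⟩ le_rfl) (le_iInf fun z' => ?_)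
  set a : ℕ → ℝ := fun k => dist b (z k) + h₁ (z k)
  have ha : Tendsto (fun k => (a k : EReal)) atTop (𝓝 0) :=
    (continuous_coe_real_ereal.tendsto 0).comp (hz.tendsto_dist_add hzh)
  have hsplit : (fun n => ((dist b (z n) + h₂ (z n) : ℝ) : EReal)) =
      (fun k => (a k : EReal)) + fun k => ((h₂ (z k) - h₁ (z k) : ℝ) : EReal) := by
    ext k
    simp only [Pi.add_apply, a, ← EReal.coe_add]
    ring_nf
  rw [hsplit]
  calc _ ≤ limsup (fun k => (a k : EReal)) atTop +
          liminf (fun k => ((h₂ (z k) - h₁ (z k) : ℝ) : EReal)) atTop :=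
        EReal.liminf_add_le (by simp [ha.limsup_eq]) (by simp [ha.limsup_eq])
    _ ≤ _ := by
      rw [ha.limsup_eq, zero_add]
      exact liminf_le_of_frequently_le'
        (.of_forall fun k => sub_le_liminf_dist_add z'.2 hlip (z k))

theorem detourCost_map_isometry {N : Type*} [MetricSpace N] {φ : M → N} (hφ : Isometry φ)
    {z w : ℕ → M} (hz : IsAlmostGeodesicSeq z) (hzh : HoroLim b z h₁) (hwh : HoroLim b w h₂)
    {g₁ g₂ : N → ℝ} (hg₁ : HoroLim (φ b) (fun n => φ (z n)) g₁)
    (hg₂ : HoroLim (φ b) (fun n => φ (w n)) g₂) :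
    detourCost b h₁ h₂ = detourCost (φ b) g₁ g₂ := by
  have hg₂φ : g₂ ∘ φ = h₂ := (hg₂.comp_isometry hφ).unique hwh
  rw [detourCost_eq_liminf hz hzh hwh.lipschitzWith_one,
    detourCost_eq_liminf (hz.comp_isometry hφ) hg₁ hg₂.lipschitzWith_one, ← hg₂φ]
  simp only [hφ.dist_eq, Function.comp_apply]

end DetourCost

theorem stmt_8_general (M N : Type*) [MetricSpace M] [MetricSpace N]
    (φ : M → N) (hφ : Isometry φ) (b : M)
    (h h' : M → ℝ)
    (z w : ℕ → M) (hz : IsAlmostGeodesicSeq z) (hw : IsAlmostGeodesicSeq w)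
    (hzh : HoroLim b z h) (hwh' : HoroLim b w h')
    (g g' : N → ℝ)
    (hg : HoroLim (φ b) (fun n => φ (z n)) g)
    (hg' : HoroLim (φ b) (fun n => φ (w n)) g') :
    detourDist b h h' = detourDist (φ b) g g' ∧
      (detourDist b h h' < ⊤ → detourDist (φ b) g g' < ⊤) := by
  have hδ : detourDist b h h' = detourDist (φ b) g g' := by
    rw [detourDist, detourDist, detourCost_map_isometry hφ hz hzh hwh' hg hg',
      detourCost_map_isometry hφ hw hwh' hzh hg' hg]
  exact ⟨hδ, fun hlt => hδ ▸ hlt⟩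

/-- the induced map on Busemann points preserves the detour distance,
and hence maps parts into parts. -/
theorem stmt_8 (M N : Type*) [MetricSpace M] [MetricSpace N]
    [ProperSpace M] [ProperSpace N]
    (hM : IsGeodesicSpace M) (hN : IsGeodesicSpace N)
    (φ : M → N) (hφ : Isometry φ) (b : M)
    (h h' : M → ℝ) (hb : IsBusemannPoint b h) (hb' : IsBusemannPoint b h')
    (z w : ℕ → M) (hz : IsAlmostGeodesicSeq z) (hw : IsAlmostGeodesicSeq w)
    (hzh : HoroLim b z h) (hwh' : HoroLim b w h')
    (g g' : N → ℝ) (hgb : IsBusemannPoint (φ b) g) (hgb' : IsBusemannPoint (φ b) g')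
    (hg : HoroLim (φ b) (fun n => φ (z n)) g)
    (hg' : HoroLim (φ b) (fun n => φ (w n)) g') :
    detourDist b h h' = detourDist (φ b) g g' ∧
      (detourDist b h h' < ⊤ → detourDist (φ b) g g' < ⊤) :=
  stmt_8_general M N φ hφ b h h' z w hz hw hzh hwh' g g' hg hg'

end
end

section
/- For j = 1,…,p let (M_j,d_j) be a proper geodesic metric space with an almost geodesic sequence (y_j^n) such that h_{y_j^n} → h_j pointwise, so h_j is a Busemann point of (M_j,d_j) with basepoint y_j^0. Let J ⊆ {1,…,p} be non-empty and α ∈ ℝ^J with min_{j∈J} α_j = 0. Then the function h(x) = max_{j∈J} (h_j(x_j) − α_j) on ∏_{j=1}^p M_j is a Busemann point of (∏_{j=1}^p M_j, d_∞) with basepoint y^0 = (y_1^0,…,y_p^0). Moreover, there exists an almost geodesic sequence (z^n) in the product with h_{z^n} → h pointwise such that for each j ∈ J the coordinate sequence (z_j^n) is an almost geodesic sequence with h_{z_j^n} → h_j pointwise, and for all n ≥ 1: d_∞(z^n, y^0) − d_j(z_j^n, y_j^0) = α_j for all j ∈ J, and d_i(z_i^n, y_i^0) = 0 for all i ∉ J.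 -/
open Filter Topology

noncomputable section

lemma aux_sup'_sub_const {ι : Type*} (s : Finset ι) (hs : s.Nonempty) (f : ι → ℝ) (c : ℝ) :
    s.sup' hs f - c = s.sup' hs (fun i => f i - c) := by
  induction hs using Finset.Nonempty.cons_induction with
  | singleton i => simp
  | cons i s hi hsne ih =>
      rw [Finset.sup'_cons hsne, Finset.sup'_cons hsne, ← ih, max_sub_sub_right]

lemma aux_tendsto_finset_sup' {ι : Type*} (s : Finset ι) (hs : s.Nonempty)
    (f : ι → ℕ → ℝ) (a : ι → ℝ)
    (hf : ∀ i ∈ s, Tendsto (fun n => f i n) atTop (nhds (a i))) :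
    Tendsto (fun n => s.sup' hs (fun i => f i n)) atTop (nhds (s.sup' hs a)) := by
  induction hs using Finset.Nonempty.cons_induction with
  | singleton i => simpa using hf i (by simp)
  | cons i s hi hsne ih =>
      simp only [Finset.sup'_cons hsne]
      exact (hf i (by simp)).max (ih (fun j hj => hf j (by simp [hj])))

lemma aux_dist_pi_sup' {p : ℕ} {M : Fin p → Type*} [∀ j, MetricSpace (M j)]
    (hne : (Finset.univ : Finset (Fin p)).Nonempty) (x z : ∀ j, M j) :
    dist x z = Finset.univ.sup' hne (fun i => dist (x i) (z i)) := by
  apply le_antisymm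
  · have h0 : (0:ℝ) ≤ Finset.univ.sup' hne (fun i => dist (x i) (z i)) := by
      obtain ⟨i, _⟩ := hne
      exact le_trans dist_nonneg (Finset.le_sup' (fun i => dist (x i) (z i)) (Finset.mem_univ i))
    exact (dist_pi_le_iff h0).2 (fun i => Finset.le_sup' (fun i => dist (x i) (z i)) (Finset.mem_univ i))
  · exact Finset.sup'_le _ _ (fun i _ => dist_le_pi_dist x z i)

lemma aux_isHorofunction_of_ag {M : Type*} [MetricSpace M] (z : ℕ → M) (h : M → ℝ)
    (hag : IsAlmostGeodesicSeq z) (hl : HoroLim (z 0) z h) :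
    IsHorofunction (z 0) h := by
  refine ⟨⟨z, hl⟩, ?_⟩
  intro x hx
  obtain ⟨N, hN⟩ := hag.2 1 one_pos
  have key : ∀ n, N ≤ n → h (z n) ≤ 1 - dist (z n) (z 0) := by
    intro n hn
    refine le_of_tendsto (hl (z n)) ?_
    filter_upwards [eventually_ge_atTop n] with m hm
    have h2 := hN m n hn hm
    have e1 : dist (z n) (z m) = dist (z m) (z n) := dist_comm _ _
    have e2 : dist (z 0) (z m) = dist (z m) (z 0) := dist_comm _ _
    simp only [horo]
    linarith
  obtain ⟨n, hn1, hn2⟩ : ∃ n, N ≤ n ∧ 1 + dist (z 0) x < dist (z n) (z 0) := by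
    have := (hag.1.eventually_gt_atTop (1 + dist (z 0) x)).and (eventually_ge_atTop N)
    obtain ⟨n, hn⟩ := this.exists
    exact ⟨n, hn.2, hn.1⟩
  have h1 := key n hn1
  have h2 : h (z n) = dist (z n) x - dist (z 0) x := by rw [hx]; rfl
  have h3 : (0:ℝ) ≤ dist (z n) x := dist_nonneg
  linarith

lemma exists_calibrated {M : Type*} [MetricSpace M] (hgeo : IsGeodesicSpace M)
    (y : ℕ → M) (hy : IsAlmostGeodesicSeq y) (h : M → ℝ)
    (hconv : HoroLim (y 0) y h) (t : ℕ → ℝ) (ht0 : t 0 = 0) (htm : Monotone t)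
    (htop : Tendsto t atTop atTop) :
    ∃ w : ℕ → M, w 0 = y 0 ∧ (∀ n, dist (w n) (y 0) = t n) ∧
      IsAlmostGeodesicSeq w ∧ HoroLim (y 0) w h := by
  classical
  have htnn : ∀ n, 0 ≤ t n := fun n => ht0 ▸ htm (Nat.zero_le n)
  choose N' hN' using fun i : ℕ => hy.2 ((1/2:ℝ)^i) (by positivity)
  have hKex : ∀ i : ℕ, ∃ K : ℕ, ∀ n, K ≤ n → (i:ℝ) ≤ dist (y n) (y 0) :=
    fun i => eventually_atTop.1 (hy.1.eventually_ge_atTop (i:ℝ))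
  choose K hK using hKex
  obtain ⟨φ, hφ0, hφs⟩ : ∃ φ : ℕ → ℕ, φ 0 = 0 ∧
      ∀ i, φ (i+1) = max (φ i + 1) (max (N' (i+1)) (K (i+1))) :=
    ⟨fun i => Nat.rec 0 (fun i ih => max (ih + 1) (max (N' (i+1)) (K (i+1)))) i,
      rfl, fun i => rfl⟩
  obtain ⟨v, hvdef⟩ : ∃ v : ℕ → M, ∀ i, v i = y (φ i) := ⟨_, fun _ => rfl⟩
  obtain ⟨r, hrdef⟩ : ∃ r : ℕ → ℝ, ∀ i, r i = dist (v i) (y 0) := ⟨_, fun _ => rfl⟩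
  obtain ⟨δ, hδdef⟩ : ∃ δ : ℕ → ℝ, ∀ i, δ i = dist (v (i+1)) (v i) + r i - r (i+1) :=
    ⟨_, fun _ => rfl⟩
  have hv0 : v 0 = y 0 := by rw [hvdef, hφ0]
  have hr0 : r 0 = 0 := by rw [hrdef, hv0, dist_self]
  have hδnn : ∀ i, 0 ≤ δ i := by
    intro i
    have h1 := dist_triangle (v (i+1)) (v i) (y 0)
    simp only [hδdef, hrdef]
    linarith
  have hφmono : Monotone φ := monotone_nat_of_le_succ (fun i => by rw [hφs]; omega)
  have hφge : ∀ i, i ≤ φ i := by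
    intro i
    induction i with
    | zero => omega
    | succ i ih => rw [hφs]; omega
  have hδle : ∀ i, δ i ≤ (1/2:ℝ)^i := by
    intro i
    cases i with
    | zero =>
        simp only [hδdef, hr0, hv0, hrdef, pow_zero]
        rw [dist_comm]
        norm_num
    | succ i =>
        have h1 : N' (i+1) ≤ φ (i+1) := by rw [hφs]; omega
        have h2 : φ (i+1) ≤ φ (i+2) := hφmono (by omega)
        have h3 := hN' (i+1) (φ (i+2)) (φ (i+1)) h1 h2
        simp only [hδdef, hrdef, hvdef]
        linarith
  have chain : ∀ i k, i ≤ k →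
      dist (v i) (v k) ≤ r k - r i + 2*((1/2:ℝ)^i - (1/2)^k) := by
    intro i k hik
    induction k, hik using Nat.le_induction with
    | base => simp
    | succ k hik ih =>
        have h1 := dist_triangle (v i) (v k) (v (k+1))
        have h2 : dist (v k) (v (k+1)) = r (k+1) - r k + δ k := by
          simp only [hδdef]
          rw [dist_comm]
          ring
        have h3 := hδle k
        have h4 : 2*(1/2:ℝ)^(k+1) = (1/2)^k := by ring
        linarith
  have hrge : ∀ i : ℕ, 1 ≤ i → (i:ℝ) ≤ r i := by
    intro i hi
    have hKi : K i ≤ φ i := by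
      cases i with
      | zero => omega
      | succ i => rw [hφs]; omega
    simp only [hrdef, hvdef]
    exact hK i (φ i) hKi
  have hex : ∀ n, ∃ i, t n ≤ r (i+1) := by
    intro n
    refine ⟨⌈t n⌉₊, ?_⟩
    have h1 : t n ≤ (⌈t n⌉₊ : ℝ) := Nat.le_ceil _
    have h2 : ((⌈t n⌉₊ + 1 : ℕ) : ℝ) ≤ r (⌈t n⌉₊ + 1) := hrge _ (by omega)
    push_cast at h2
    linarith
  obtain ⟨idx, hidxdef⟩ : ∃ f : ℕ → ℕ, ∀ n, f n = Nat.find (hex n) := ⟨_, fun _ => rfl⟩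
  have hidxub : ∀ n, t n ≤ r (idx n + 1) := fun n => by
    rw [hidxdef]; exact Nat.find_spec (hex n)
  have hidxlb : ∀ n, r (idx n) ≤ t n := by
    intro n
    rcases Nat.eq_zero_or_pos (idx n) with h0 | hpos
    · rw [h0, hr0]; exact htnn n
    · obtain ⟨i, hi⟩ := Nat.exists_eq_add_of_lt hpos
      have hlt : i < Nat.find (hex n) := by rw [← hidxdef]; omega
      have hmin := Nat.find_min (hex n) hlt
      push_neg at hmin
      have he : idx n = i + 1 := by omega
      rw [he]
      exact hmin.le
  have hidxmono : Monotone idx := by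
    intro n m hnm
    rw [hidxdef, hidxdef]
    exact Nat.find_le (le_trans (htm hnm) (by rw [← hidxdef]; exact hidxub m))
  have hidxtop : ∀ I : ℕ, ∃ Nn : ℕ, ∀ n, Nn ≤ n → I ≤ idx n := by
    intro I
    have hrne : (Finset.range (I+1)).Nonempty := ⟨0, by simp⟩
    obtain ⟨Nn, hNn⟩ := eventually_atTop.1
      (htop.eventually_ge_atTop ((Finset.range (I+1)).sup' hrne r + 1))
    refine ⟨Nn, fun n hn => ?_⟩
    by_contra hlt
    push_neg at hlt
    have h1 : r (idx n + 1) ≤ (Finset.range (I+1)).sup' hrne r :=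
      Finset.le_sup' r (by simp only [Finset.mem_range]; omega)
    have h2 := hidxub n
    have h3 := hNn n hn
    linarith
  choose γ hγ0 hγL hγd using fun i => hgeo (v i) (v (i+1))
  obtain ⟨L, hLdef⟩ : ∃ L : ℕ → ℝ, ∀ i, L i = dist (v i) (v (i+1)) := ⟨_, fun _ => rfl⟩
  have hLnn : ∀ i, 0 ≤ L i := fun i => by rw [hLdef]; exact dist_nonneg
  have hLδ : ∀ i, L i = r (i+1) - r i + δ i := by
    intro i
    simp only [hLdef, hδdef]
    rw [dist_comm]
    ring
  have hIVT : ∀ n, ∃ s, s ∈ Set.Icc 0 (L (idx n)) ∧ dist (γ (idx n) s) (y 0) = t n := by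
    intro n
    have hicc : Set.Icc (0:ℝ) (L (idx n)) = Set.Icc 0 (dist (v (idx n)) (v (idx n + 1))) := by
      rw [hLdef]
    have hlip : LipschitzOnWith 1 (fun u => dist (γ (idx n) u) (y 0)) (Set.Icc 0 (L (idx n))) := by
      rw [lipschitzOnWith_iff_dist_le_mul]
      intro a ha c hc
      rw [hicc] at ha hc
      have hd := hγd (idx n) a ha c hc
      rw [Real.dist_eq, Real.dist_eq]
      calc |dist (γ (idx n) a) (y 0) - dist (γ (idx n) c) (y 0)|
          ≤ dist (γ (idx n) a) (γ (idx n) c) := abs_dist_sub_le _ _ _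
        _ = |a - c| := hd
        _ ≤ 1 * |a - c| := by norm_num
    have key := intermediate_value_Icc (hLnn (idx n)) hlip.continuousOn
    have hmem : t n ∈ Set.Icc (dist (γ (idx n) 0) (y 0)) (dist (γ (idx n) (L (idx n))) (y 0)) := by
      rw [hγ0]
      have hgl : γ (idx n) (L (idx n)) = v (idx n + 1) := by rw [hLdef]; exact hγL (idx n)
      rw [hgl]
      constructor
      · have := hidxlb n; rwa [hrdef] at this
      · have := hidxub n; rwa [hrdef] at this
    obtain ⟨u, hu1, hu2⟩ := key hmem
    exact ⟨u, hu1, hu2⟩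
  choose s hsmem hsdist using hIVT
  obtain ⟨w, hwdef⟩ : ∃ w : ℕ → M, ∀ n, w n = γ (idx n) (s n) := ⟨_, fun _ => rfl⟩
  have hsmem' : ∀ n, s n ∈ Set.Icc 0 (dist (v (idx n)) (v (idx n + 1))) := by
    intro n
    have := hsmem n
    rwa [hLdef] at this
  have Fw : ∀ n, dist (w n) (y 0) = t n := fun n => by rw [hwdef]; exact hsdist n
  have Fa : ∀ n, dist (v (idx n)) (w n) = s n := by
    intro n
    have h1 := hγd (idx n) 0 ⟨le_refl _, dist_nonneg⟩ (s n) (hsmem' n)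
    rw [hγ0] at h1
    have h2 : |0 - s n| = s n := by
      rw [abs_sub_comm, sub_zero]
      exact abs_of_nonneg (hsmem' n).1
    rw [hwdef, h1, h2]
  have Fb : ∀ n, dist (w n) (v (idx n + 1)) = L (idx n) - s n := by
    intro n
    have h1 := hγd (idx n) (s n) (hsmem' n) (dist (v (idx n)) (v (idx n + 1)))
      ⟨dist_nonneg, le_refl _⟩
    rw [hγL] at h1
    have h2 : |s n - dist (v (idx n)) (v (idx n + 1))| = dist (v (idx n)) (v (idx n + 1)) - s n := by
      rw [abs_sub_comm]
      exact abs_of_nonneg (by linarith [(hsmem' n).2])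
    rw [hwdef, h1, h2, hLdef]
  have Fsl : ∀ n, t n - r (idx n) ≤ s n := by
    intro n
    have h1 := dist_triangle (w n) (v (idx n)) (y 0)
    rw [Fw n, dist_comm (w n) (v (idx n)), Fa n, ← hrdef] at h1
    linarith
  have Fsu : ∀ n, s n ≤ t n - r (idx n) + δ (idx n) := by
    intro n
    have h1 := dist_triangle (v (idx n + 1)) (w n) (y 0)
    rw [dist_comm (v (idx n + 1)) (w n), Fb n, Fw n, ← hrdef] at h1
    have h2 := hLδ (idx n)
    linarith
  have powmono : ∀ {a c : ℕ}, a ≤ c → (1/2:ℝ)^c ≤ (1/2)^a :=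
    fun hac => pow_le_pow_of_le_one (by norm_num) (by norm_num) hac
  have pownn : ∀ a : ℕ, (0:ℝ) ≤ (1/2)^a := fun a => by positivity
  have BoundUp : ∀ j n, j ≤ idx n → dist (v j) (w n) ≤ t n - r j + 3 * (1/2:ℝ)^j := by
    intro j n hj
    have h1 := dist_triangle (v j) (v (idx n)) (w n)
    have h2 := chain j (idx n) hj
    have h3 := Fa n
    have h4 := Fsu n
    have h5 := hδle (idx n)
    have h6 := powmono hj
    have h7 := pownn (idx n)
    linarith
  have BoundDown : ∀ n k, idx n + 1 ≤ k →
      dist (w n) (v k) ≤ r k - t n + 2 * (1/2:ℝ)^(idx n) := by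
    intro n k hk
    have h1 := dist_triangle (w n) (v (idx n + 1)) (v k)
    have h2 := chain (idx n + 1) k hk
    have h3 := Fb n
    have h4 := Fsl n
    have h5 := hLδ (idx n)
    have h6 := hδle (idx n)
    have h7 : 2*(1/2:ℝ)^(idx n + 1) = (1/2)^(idx n) := by ring
    have h8 := pownn k
    linarith
  have DistW : ∀ k m, k ≤ m → dist (w m) (w k) ≤ t m - t k + 3 * (1/2:ℝ)^(idx k) := by
    intro k m hkm
    have htkm := htm hkm
    rcases eq_or_lt_of_le (hidxmono hkm) with heq | hlt
    · have hsm : s m ∈ Set.Icc 0 (dist (v (idx k)) (v (idx k + 1))) := by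
        rw [heq]; exact hsmem' m
      have hd : dist (w m) (w k) = |s m - s k| := by
        have h1 := hγd (idx k) (s m) hsm (s k) (hsmem' k)
        calc dist (w m) (w k) = dist (γ (idx m) (s m)) (γ (idx k) (s k)) := by
              rw [hwdef, hwdef]
          _ = dist (γ (idx k) (s m)) (γ (idx k) (s k)) := by rw [← heq]
          _ = |s m - s k| := h1
      have h2 := Fsl k
      have h3 := Fsu k
      have h4 : t m - r (idx m) ≤ s m := Fsl m
      have h5 : s m ≤ t m - r (idx m) + δ (idx m) := Fsu m
      rw [← heq] at h4 h5
      have h6 := hδle (idx k)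
      have h7 := hδnn (idx k)
      have h8 := pownn (idx k)
      rw [hd, abs_sub_le_iff]
      constructor <;> linarith
    · have h1 := dist_triangle4 (w k) (v (idx k + 1)) (v (idx m)) (w m)
      have h2 := Fb k
      have h3 := Fsl k
      have h4 := hLδ (idx k)
      have h5 := chain (idx k + 1) (idx m) hlt
      have h6 : dist (v (idx m)) (w m) = s m := Fa m
      have h7 := Fsu m
      have h8 := hδle (idx k)
      have h9 := hδle (idx m)
      have h10 := powmono (le_of_lt hlt)
      have h11 : 2*(1/2:ℝ)^(idx k + 1) = (1/2)^(idx k) := by ring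
      have h12 := pownn (idx m)
      rw [dist_comm (w m) (w k)]
      linarith
  have hw0 : w 0 = y 0 := eq_of_dist_eq_zero (by rw [Fw 0, ht0])
  have hAG : IsAlmostGeodesicSeq w := by
    constructor
    · have e : (fun n => dist (w n) (w 0)) = t := funext fun n => by rw [hw0, Fw n]
      rw [e]; exact htop
    · intro ε hε
      obtain ⟨I, hI⟩ : ∃ I : ℕ, (1/2:ℝ)^I < ε/3 :=
        exists_pow_lt_of_lt_one (by linarith) (by norm_num)
      obtain ⟨Nn, hNn⟩ := hidxtop I
      refine ⟨Nn, fun m k hk hkm => ?_⟩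
      have h1 := DistW k m hkm
      have h2 : (1/2:ℝ)^(idx k) ≤ (1/2)^I := powmono (hNn k hk)
      have e1 : dist (w k) (w 0) = t k := by rw [hw0]; exact Fw k
      have e2 : dist (w m) (w 0) = t m := by rw [hw0]; exact Fw m
      rw [e1, e2]
      linarith
  have hφtop : Tendsto φ atTop atTop := tendsto_atTop_mono hφge tendsto_id
  have hHL : HoroLim (y 0) w h := by
    intro x
    have hvconv : Tendsto (fun k => horo (y 0) (v k) x) atTop (nhds (h x)) := by
      have := (hconv x).comp hφtop
      apply this.congr
      intro k
      simp only [Function.comp, hvdef]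
    have Lower : ∀ n, h x - 2 * (1/2:ℝ)^(idx n) ≤ dist x (w n) - t n := by
      intro n
      have hev : ∀ᶠ k in atTop, horo (y 0) (v k) x - 2 * (1/2:ℝ)^(idx n)
          ≤ dist x (w n) - t n := by
        filter_upwards [eventually_ge_atTop (idx n + 1)] with k hk
        have h1 := BoundDown n k hk
        have h2 := dist_triangle x (w n) (v k)
        have e1 : horo (y 0) (v k) x = dist x (v k) - dist (y 0) (v k) := rfl
        have e2 : dist (y 0) (v k) = r k := by rw [hrdef]; exact dist_comm _ _
        rw [e1, e2]
        linarith
      have := le_of_tendsto (hvconv.sub_const (2 * (1/2:ℝ)^(idx n))) hev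
      linarith
    have Upper : ∀ j n, j ≤ idx n →
        dist x (w n) - t n ≤ horo (y 0) (v j) x + 3 * (1/2:ℝ)^j := by
      intro j n hj
      have h1 := BoundUp j n hj
      have h2 := dist_triangle x (v j) (w n)
      have e1 : horo (y 0) (v j) x = dist x (v j) - dist (y 0) (v j) := rfl
      have e2 : dist (y 0) (v j) = r j := by rw [hrdef]; exact dist_comm _ _
      rw [e1, e2]
      linarith
    rw [Metric.tendsto_atTop]
    intro ε hε
    obtain ⟨j0, hj0⟩ : ∃ j0 : ℕ, (1/2:ℝ)^j0 < ε/9 :=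
      exists_pow_lt_of_lt_one (by linarith) (by norm_num)
    obtain ⟨N1, hN1⟩ := Metric.tendsto_atTop.1 hvconv (ε/3) (by linarith)
    obtain ⟨N2, hN2⟩ := hidxtop (max j0 N1)
    refine ⟨N2, fun n hn => ?_⟩
    have hidxn : max j0 N1 ≤ idx n := hN2 n hn
    have hup := Upper (max j0 N1) n hidxn
    have hlo := Lower n
    have hvj := hN1 (max j0 N1) (le_max_right _ _)
    rw [Real.dist_eq] at hvj
    rw [Real.dist_eq]
    have p1 : (1/2:ℝ)^(max j0 N1) ≤ (1/2)^j0 := powmono (le_max_left _ _)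
    have p2 : (1/2:ℝ)^(idx n) ≤ (1/2)^(max j0 N1) := powmono hidxn
    have e1 : horo (y 0) (w n) x = dist x (w n) - dist (y 0) (w n) := rfl
    have e2 : dist (y 0) (w n) = t n := by rw [dist_comm]; exact Fw n
    rw [e1, e2]
    rw [abs_lt] at hvj ⊢
    constructor <;> linarith
  exact ⟨w, hw0, Fw, hAG, hHL⟩

/-- products of Busemann points are Busemann points of the product
(Proposition on the structure of Busemann points of product spaces). -/
theorem stmt_9 (p : ℕ) (M : Fin p → Type*) [∀ j, MetricSpace (M j)] [∀ j, ProperSpace (M j)]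
    (hgeo : ∀ j, IsGeodesicSpace (M j))
    (y : ∀ j, ℕ → M j) (hy : ∀ j, IsAlmostGeodesicSeq (y j))
    (hs : ∀ j, M j → ℝ) (hconv : ∀ j, HoroLim (y j 0) (y j) (hs j))
    (J : Finset (Fin p)) (hJ : J.Nonempty)
    (α : Fin p → ℝ) (hα : ∀ j ∈ J, 0 ≤ α j) (hα0 : ∃ j ∈ J, α j = 0) :
    IsBusemannPoint (fun j => y j 0) (fun x => J.sup' hJ fun j => hs j (x j) - α j) ∧
    ∃ z : ℕ → ∀ j, M j, IsAlmostGeodesicSeq z ∧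
      HoroLim (fun j => y j 0) z (fun x => J.sup' hJ fun j => hs j (x j) - α j) ∧
      (∀ j ∈ J, IsAlmostGeodesicSeq (fun n => z n j) ∧
        HoroLim (y j 0) (fun n => z n j) (hs j)) ∧
      (∀ n : ℕ, 1 ≤ n →
        (∀ j ∈ J, dist (z n) (fun j => y j 0) - dist (z n j) (y j 0) = α j) ∧
        (∀ i ∉ J, dist (z n i) (y i 0) = 0)) := by
  classical
  obtain ⟨j0, hj0J, hj00⟩ := hα0
  have hpne : (Finset.univ : Finset (Fin p)).Nonempty := ⟨j0, Finset.mem_univ _⟩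
  have hAj : ∀ j ∈ J, α j ≤ J.sup' hJ α := fun j hj => Finset.le_sup' α hj
  set A : ℝ := J.sup' hJ α with hA
  have hA0 : 0 ≤ A := hj00 ▸ hAj j0 hj0J
  obtain ⟨T, hT0, hTval⟩ : ∃ T : Fin p → ℕ → ℝ, (∀ j, T j 0 = 0) ∧
      ∀ j, ∀ n : ℕ, 1 ≤ n → T j n = A + n - α j := by
    refine ⟨fun j n => if n = 0 then 0 else A + n - α j, fun j => by simp, ?_⟩
    intro j n hn
    simp [Nat.one_le_iff_ne_zero.1 hn]
  have H : ∀ j : Fin p, ∃ w : ℕ → M j, w 0 = y j 0 ∧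
      (j ∈ J → (∀ n, dist (w n) (y j 0) = T j n) ∧ IsAlmostGeodesicSeq w ∧
        HoroLim (y j 0) w (hs j)) ∧ (j ∉ J → ∀ n, w n = y j 0) := by
    intro j
    by_cases hj : j ∈ J
    · have hαA : α j ≤ A := hAj j hj
      have hα0j : 0 ≤ α j := hα j hj
      have hmono : Monotone (T j) := by
        apply monotone_nat_of_le_succ
        intro n
        rcases Nat.eq_zero_or_pos n with h0 | h1
        · subst h0
          rw [hT0, hTval j 1 le_rfl]
          push_cast
          linarith
        · rw [hTval j n h1, hTval j (n+1) (by omega)]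
          push_cast
          linarith
      have httop : Tendsto (T j) atTop atTop := by
        refine tendsto_atTop_mono' atTop ?_ tendsto_natCast_atTop_atTop
        filter_upwards [eventually_ge_atTop 1] with n hn
        rw [hTval j n hn]
        linarith
      obtain ⟨w, h0, h1, h2, h3⟩ := exists_calibrated (hgeo j) (y j) (hy j) (hs j)
        (hconv j) (T j) (hT0 j) hmono httop
      exact ⟨w, h0, fun _ => ⟨h1, h2, h3⟩, fun hj' => absurd hj hj'⟩
    · exact ⟨fun _ => y j 0, rfl, fun hj' => absurd hj' hj, fun _ _ => rfl⟩
  choose w hw0 hwJ hwN using H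
  obtain ⟨z, hzdef⟩ : ∃ z : ℕ → ∀ j, M j, ∀ n j, z n j = w j n := ⟨_, fun _ _ => rfl⟩
  have hz0 : z 0 = (fun j => y j 0) := funext fun j => by rw [hzdef]; exact hw0 j
  have hzJ : ∀ j ∈ J, ∀ n, dist (z n j) (y j 0) = T j n := by
    intro j hj n
    rw [hzdef]
    exact (hwJ j hj).1 n
  have hzN : ∀ j, j ∉ J → ∀ n, z n j = y j 0 := by
    intro j hj n
    rw [hzdef]
    exact hwN j hj n
  have hdzb : ∀ n : ℕ, 1 ≤ n → dist (z n) (fun j => y j 0) = A + n := by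
    intro n hn
    rw [aux_dist_pi_sup' hpne]
    apply le_antisymm
    · apply Finset.sup'_le
      intro i _
      by_cases hi : i ∈ J
      · rw [hzJ i hi n, hTval i n hn]
        have := hα i hi
        linarith
      · rw [hzN i hi n, dist_self]
        have h1 : (1:ℝ) ≤ n := by exact_mod_cast hn
        linarith
    · have e : (A + n : ℝ) = dist (z n j0) (y j0 0) := by
        rw [hzJ j0 hj0J n, hTval j0 n hn, hj00]
        ring
      rw [e]
      exact Finset.le_sup' (fun i => dist (z n i) (y i 0)) (Finset.mem_univ j0)
  have hAGz : IsAlmostGeodesicSeq z := by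
    constructor
    · rw [hz0]
      refine tendsto_atTop_mono' atTop ?_ tendsto_natCast_atTop_atTop
      filter_upwards [eventually_ge_atTop 1] with n hn
      rw [hdzb n hn]
      linarith
    · intro ε hε
      have hex2 : ∀ j : Fin p, ∃ Nj : ℕ, j ∈ J → ∀ m k, Nj ≤ k → k ≤ m →
          dist (w j m) (w j k) + dist (w j k) (w j 0) - dist (w j m) (w j 0) < ε := by
        intro j
        by_cases hj : j ∈ J
        · obtain ⟨Nj, hNj⟩ := ((hwJ j hj).2.1).2 ε hε
          exact ⟨Nj, fun _ => hNj⟩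
        · exact ⟨0, fun hh => absurd hh hj⟩
      choose Nf hNf using hex2
      refine ⟨(Finset.univ.sup Nf) + 1, fun m k hk hkm => ?_⟩
      have hk1 : 1 ≤ k := by omega
      have hm1 : 1 ≤ m := le_trans hk1 hkm
      have hdzmk : dist (z m) (z k) < ((m:ℝ) - k) + ε := by
        rw [aux_dist_pi_sup' hpne]
        rw [Finset.sup'_lt_iff]
        intro i _
        by_cases hi : i ∈ J
        · have hNi := hNf i hi m k
            (le_trans (Nat.le_succ_of_le (Finset.le_sup (Finset.mem_univ i))) hk) hkm
          have e1 : dist (w i k) (w i 0) = T i k := by rw [hw0 i]; exact (hwJ i hi).1 k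
          have e2 : dist (w i m) (w i 0) = T i m := by rw [hw0 i]; exact (hwJ i hi).1 m
          rw [e1, e2, hTval i k hk1, hTval i m hm1] at hNi
          have e3 : dist (z m i) (z k i) = dist (w i m) (w i k) := by
            rw [hzdef, hzdef]
          rw [e3]
          linarith
        · rw [hzN i hi m, hzN i hi k, dist_self]
          have : (k:ℝ) ≤ m := by exact_mod_cast hkm
          linarith
      have d1 : dist (z k) (z 0) = A + k := by rw [hz0]; exact hdzb k hk1
      have d2 : dist (z m) (z 0) = A + m := by rw [hz0]; exact hdzb m hm1
      rw [d1, d2]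
      linarith
  have hHLz : HoroLim (fun j => y j 0) z (fun x => J.sup' hJ fun j => hs j (x j) - α j) := by
    intro x
    have hgj : ∀ j ∈ J, Tendsto (fun n : ℕ => dist (x j) (z n j) - (A + n)) atTop
        (nhds (hs j (x j) - α j)) := by
      intro j hj
      have h1 : Tendsto (fun n => horo (y j 0) (w j n) (x j) - α j) atTop
          (nhds (hs j (x j) - α j)) := ((hwJ j hj).2.2 (x j)).sub_const (α j)
      apply h1.congr'
      filter_upwards [eventually_ge_atTop 1] with n hn
      simp only [horo]
      have e1 : dist (y j 0) (w j n) = T j n := by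
        rw [dist_comm]; exact (hwJ j hj).1 n
      have e2 : dist (x j) (z n j) = dist (x j) (w j n) := by rw [hzdef]
      rw [e1, hTval j n hn, e2]
      ring
    have hg : Tendsto (fun n => J.sup' hJ (fun j => dist (x j) (z n j) - (A + n)))
        atTop (nhds (J.sup' hJ fun j => hs j (x j) - α j)) :=
      aux_tendsto_finset_sup' J hJ _ _ hgj
    apply hg.congr'
    have hCb : Tendsto (fun n : ℕ => Finset.univ.sup' hpne (fun i => dist (x i) (y i 0)) - (A + n))
        atTop atBot := by
      apply tendsto_atBot_add_const_left
      exact tendsto_neg_atBot_iff.2 (tendsto_atTop_add_const_left _ _ tendsto_natCast_atTop_atTop)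
    have hev1 := hCb.eventually (eventually_lt_atBot ((J.sup' hJ fun j => hs j (x j) - α j) - 1))
    have hev2 := hg.eventually (eventually_gt_nhds
      (show (J.sup' hJ fun j => hs j (x j) - α j) - 1 < J.sup' hJ fun j => hs j (x j) - α j
        by linarith))
    filter_upwards [hev1, hev2, eventually_ge_atTop 1] with n h1 h2 hn
    have hbz : dist (fun j => y j 0) (z n) = A + n := by
      rw [dist_comm]; exact hdzb n hn
    show J.sup' hJ (fun j => dist (x j) (z n j) - (A + n)) = horo _ (z n) x
    simp only [horo]
    rw [hbz, aux_dist_pi_sup' hpne, aux_sup'_sub_const]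
    apply le_antisymm
    · apply Finset.sup'_le
      intro j hj
      exact Finset.le_sup' (fun i => dist (x i) (z n i) - (A + n)) (Finset.mem_univ j)
    · apply Finset.sup'_le
      intro i _
      by_cases hi : i ∈ J
      · exact Finset.le_sup' (fun j => dist (x j) (z n j) - (A + n)) hi
      · rw [hzN i hi n]
        have hC : dist (x i) (y i 0) ≤ Finset.univ.sup' hpne (fun i => dist (x i) (y i 0)) :=
          Finset.le_sup' (fun i => dist (x i) (y i 0)) (Finset.mem_univ i)
        linarith
  have hHoro : IsHorofunction (fun j => y j 0) (fun x => J.sup' hJ fun j => hs j (x j) - α j) := by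
    have hl' : HoroLim (z 0) z (fun x => J.sup' hJ fun j => hs j (x j) - α j) := by
      rw [hz0]; exact hHLz
    have := aux_isHorofunction_of_ag z _ hAGz hl'
    rwa [hz0] at this
  refine ⟨⟨hHoro, z, hAGz, hHLz⟩, z, hAGz, hHLz, ?_, ?_⟩
  · intro j hj
    constructor
    · have e : (fun n => z n j) = w j := funext fun n => hzdef n j
      rw [e]
      exact (hwJ j hj).2.1
    · have e : (fun n => z n j) = w j := funext fun n => hzdef n j
      rw [e]
      exact (hwJ j hj).2.2
  · intro n hn
    refine ⟨fun j hj => ?_, fun i hi => ?_⟩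
    · rw [hdzb n hn, hzJ j hj n, hTval j n hn]
      ring
    · rw [hzN i hi n, dist_self]
end
end

section
/- For j = 1,…,p let (M_j,d_j) be a proper geodesic metric space with an almost geodesic sequence (y_j^n) converging pointwise (via h_{y_j^n}) to a Busemann point h_j with basepoint y_j^0. Let J ⊆ {1,…,p} be non-empty and let α, β ∈ ℝ^J with min_{j∈J} α_j = 0 and min_{j∈J} β_j = 0. Then the Busemann points h(x) = max_{j∈J} (h_j(x_j) − α_j) and h'(x) = max_{j∈J} (h_j(x_j) − β_j) of (∏_{j=1}^p M_j, d_∞) with basepoint y^0 = (y_1^0,…,y_p^0) satisfy δ(h,h') = ‖α − β‖_var = max_{j∈J}(α_j − β_j) + max_{j∈J}(β_j − α_j). -/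
open Filter Topology

noncomputable section

section Aux
variable {M : Type*} [MetricSpace M]

lemma horoLim_base {b : M} {y : ℕ → M} {h : M → ℝ} (hl : HoroLim b y h) : h b = 0 := by
  have := hl b
  have h2 : Tendsto (fun _ : ℕ => (0:ℝ)) atTop (nhds (h b)) := by
    refine this.congr (fun n => ?_)
    simp [horo]
  exact tendsto_nhds_unique h2 tendsto_const_nhds

lemma horoLim_lip {b : M} {y : ℕ → M} {h : M → ℝ} (hl : HoroLim b y h) (x z : M) :
    h x - h z ≤ dist x z := by
  have ht : Tendsto (fun n => horo b (y n) x - horo b (y n) z) atTop (nhds (h x - h z)) :=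
    (hl x).sub (hl z)
  refine le_of_tendsto ht (Eventually.of_forall fun n => ?_)
  simp only [horo]
  have := dist_triangle x z (y n)
  linarith

lemma horoLim_neg_dist_le {b : M} {y : ℕ → M} {h : M → ℝ} (hl : HoroLim b y h) (x : M) :
    -dist b x ≤ h x := by
  have := horoLim_lip hl b x
  rw [horoLim_base hl] at this
  linarith

/-- Along an almost geodesic sequence, `h(y k) + d(b, y k)` is eventually small. -/
lemma almost_h_bound {y : ℕ → M} {h : M → ℝ}
    (hy : IsAlmostGeodesicSeq y) (hl : HoroLim (y 0) y h) :
    ∀ ε > (0:ℝ), ∃ N, ∀ k ≥ N, h (y k) + dist (y 0) (y k) ≤ ε := by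
  intro ε hε
  obtain ⟨N, hN⟩ := hy.2 ε hε
  refine ⟨N, fun k hk => ?_⟩
  have ht : Tendsto (fun m => horo (y 0) (y m) (y k)) atTop (nhds (h (y k))) := hl (y k)
  have hev : ∀ᶠ m in atTop, horo (y 0) (y m) (y k) ≤ ε - dist (y 0) (y k) := by
    filter_upwards [eventually_ge_atTop k] with m hm
    have h1 := hN m k hk hm
    simp only [horo]
    rw [dist_comm (y k) (y m), dist_comm (y 0) (y m)] at *
    rw [dist_comm (y k) (y 0)] at h1
    linarith
  have := le_of_tendsto ht hev
  linarith

/-- Limit of sup' of convergent sequences. -/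
lemma tendsto_finset_sup' {ι : Type*} (s : Finset ι) (hs : s.Nonempty) (f : ι → ℕ → ℝ)
    (g : ι → ℝ) (hf : ∀ i ∈ s, Tendsto (fun n => f i n) atTop (nhds (g i))) :
    Tendsto (fun n => s.sup' hs (fun i => f i n)) atTop (nhds (s.sup' hs g)) := by
  induction hs using Finset.Nonempty.cons_induction with
  | singleton i =>
      simp only [Finset.sup'_singleton]
      exact hf i (by simp)
  | cons i s his hs ih =>
      simp only [Finset.sup'_cons hs]
      exact (hf i (by simp)).max (ih (fun j hj => hf j (by simp [hj])))

end Aux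
/-- An interpolated almost-geodesic path converging to `h`. -/
structure GoodPath {M : Type*} [MetricSpace M] (b : M) (h : M → ℝ) where
  Q : ℝ → M
  err : ℝ → ℝ
  Q0 : Q 0 = b
  err_nonneg : ∀ x, 0 ≤ err x
  err_tendsto : Tendsto err atTop (nhds 0)
  dist_le : ∀ x, 0 ≤ x → dist b (Q x) ≤ x
  dist_ge : ∀ x, 0 ≤ x → x - err x ≤ dist b (Q x)
  h_le : ∀ x, 0 ≤ x → h (Q x) ≤ -x + err x
  dist_QQ : ∀ x x', 0 ≤ x → x ≤ x' → dist (Q x) (Q x') ≤ x' - x + err x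
  horo_tendsto : ∀ z, Tendsto (fun x => dist z (Q x) - x) atTop (nhds (h z))

lemma exists_goodPath {M : Type*} [MetricSpace M] (hgeo : IsGeodesicSpace M)
    (y : ℕ → M) (hy : IsAlmostGeodesicSeq y) (h : M → ℝ) (hl : HoroLim (y 0) y h) :
    Nonempty (GoodPath (y 0) h) := by
  set b := y 0 with hbdef
  set ε : ℕ → ℝ := fun k => (2:ℝ)⁻¹ ^ k with hεdef
  have εpos : ∀ k, 0 < ε k := fun k => pow_pos (by norm_num) k
  have εto : Tendsto ε atTop (nhds 0) :=
    tendsto_pow_atTop_nhds_zero_of_lt_one (by norm_num) (by norm_num)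
  -- choose thresholds
  have hNex : ∀ k : ℕ, ∃ N, (∀ m k' : ℕ, N ≤ k' → k' ≤ m →
      dist (y m) (y k') + dist (y k') b - dist (y m) b < ε k) ∧
      (∀ k' ≥ N, h (y k') + dist b (y k') ≤ ε k) := by
    intro k
    obtain ⟨N1, hN1⟩ := hy.2 (ε k) (εpos k)
    obtain ⟨N2, hN2⟩ := almost_h_bound hy hl (ε k) (εpos k)
    exact ⟨max N1 N2, fun m k' h1 h2 => hN1 m k' (le_trans (le_max_left _ _) h1) h2,
      fun k' h1 => hN2 k' (le_trans (le_max_right _ _) h1)⟩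
  choose N hN1 hN2 using hNex
  -- recursive subsequence
  have hex : ∀ (s k : ℕ), ∃ n, s < n ∧ N k ≤ n ∧ dist b (y s) + 1 ≤ dist b (y n) := by
    intro s k
    have h1 : ∀ᶠ n in atTop, dist b (y s) + 1 ≤ dist (y n) (y 0) :=
      hy.1.eventually_ge_atTop _
    have h2 : ∀ᶠ n in atTop, s < n ∧ N k ≤ n :=
      (eventually_gt_atTop s).and (eventually_ge_atTop (N k))
    obtain ⟨n, ⟨hn1, hn2⟩, hn3⟩ := (h2.and h1).exists
    exact ⟨n, hn1, hn2, by rwa [dist_comm (y n) (y 0)] at hn3⟩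
  set σ : ℕ → ℕ := fun k => Nat.rec 0 (fun k ih => (hex ih (k+1)).choose) k with hσdef
  have hσsucc : ∀ k, σ (k+1) = (hex (σ k) (k+1)).choose := fun k => rfl
  have hσ0 : σ 0 = 0 := rfl
  set w : ℕ → M := fun k => y (σ k) with hwdef
  set t : ℕ → ℝ := fun k => dist b (w k) with htdef
  have hw0 : w 0 = b := by simp [hwdef, hσ0, hbdef]
  have ht0 : t 0 = 0 := by simp [htdef, hw0]
  have hσlt : ∀ k, σ k < σ (k+1) := fun k => by
    rw [hσsucc k]; exact (hex (σ k) (k+1)).choose_spec.1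
  have hσN : ∀ k, N (k+1) ≤ σ (k+1) := fun k => by
    rw [hσsucc k]; exact (hex (σ k) (k+1)).choose_spec.2.1
  have htstep : ∀ k, t k + 1 ≤ t (k+1) := fun k => by
    have := (hex (σ k) (k+1)).choose_spec.2.2
    rw [← hσsucc k] at this; exact this
  clear hσdef
  clear_value σ
  have hσmono : StrictMono σ := strictMono_nat_of_lt_succ hσlt
  have htmono : StrictMono t := strictMono_nat_of_lt_succ (fun k => by linarith [htstep k])
  have htge : ∀ k : ℕ, (k:ℝ) ≤ t k := by
    intro k
    induction k with
    | zero => norm_num [ht0]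
    | succ k ih => push_cast; linarith [htstep k]
  -- key almost-geodesic estimates along w
  have W4 : ∀ k m, k ≤ m → dist (w m) (w k) + t k - t m < ε k := by
    intro k m hkm
    match k with
    | 0 =>
      rw [hw0, ht0]
      have h2 : t m = dist b (w m) := rfl
      rw [h2, dist_comm (w m) b]
      linarith [εpos 0]
    | (k+1) =>
      have h1 := hN1 (k+1) (σ m) (σ (k+1)) (hσN k) (hσmono.monotone hkm)
      simpa [htdef, hwdef, dist_comm b] using h1
  have W5 : ∀ k, h (w k) + t k ≤ ε k := by
    intro k
    match k with
    | 0 =>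
      rw [hw0, ht0, horoLim_base hl]
      linarith [εpos 0]
    | (k+1) => exact hN2 (k+1) (σ (k+1)) (hσN k)
  -- geodesics between consecutive points
  choose γ hγ0 hγ1 hγiso using fun k => hgeo (w k) (w (k+1))
  set L : ℕ → ℝ := fun k => dist (w k) (w (k+1)) with hLdef
  have hLge : ∀ k, t (k+1) - t k ≤ L k := by
    intro k
    have := dist_triangle b (w k) (w (k+1))
    simp only [htdef, hLdef]; linarith
  have hLle : ∀ k, L k ≤ t (k+1) - t k + ε k := by
    intro k
    have := W4 k (k+1) (Nat.le_succ k)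
    simp only [hLdef, dist_comm (w (k+1)) (w k)] at *
    linarith
  have hLpos : ∀ k, 0 < L k := fun k => by linarith [hLge k, htstep k]
  -- segment index
  have exK : ∀ x : ℝ, ∃ k, x < t (k+1) := by
    intro x
    obtain ⟨k, hk⟩ := exists_nat_gt x
    exact ⟨k, lt_of_lt_of_le hk (le_trans (htge k) (le_of_lt (htmono (Nat.lt_succ_self k))))⟩
  set K : ℝ → ℕ := fun x => Nat.find (exK x) with hKdef
  have hKlt : ∀ x, x < t (K x + 1) := fun x => Nat.find_spec (exK x)
  have hKle : ∀ x, 0 ≤ x → t (K x) ≤ x := by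
    intro x hx
    rcases Nat.eq_zero_or_pos (K x) with h0 | h0
    · rw [h0, ht0]; exact hx
    · obtain ⟨k, hk⟩ := Nat.exists_eq_succ_of_ne_zero (Nat.pos_iff_ne_zero.mp h0)
      have hmin := Nat.find_min (exK x) (show k < K x by omega)
      push_neg at hmin
      have h2 : t (k + 1) ≤ x := hmin
      rw [hk]; exact h2
  have hKmono : ∀ x x', x ≤ x' → K x ≤ K x' :=
    fun x x' hxx' => Nat.find_min' (exK x) (lt_of_le_of_lt hxx' (hKlt x'))
  have hKtop : Tendsto K atTop atTop := by
    rw [tendsto_atTop_atTop]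
    intro c
    refine ⟨t c, fun x hx => ?_⟩
    by_contra hc
    push_neg at hc
    have h1 : K x + 1 ≤ c := hc
    have := htmono.monotone h1
    linarith [hKlt x]
  clear hKdef
  clear_value K
  set Q : ℝ → M := fun x => γ (K x) (x - t (K x)) with hQdef
  set err : ℝ → ℝ := fun x => ε (K x) + ε (K x + 1) with herrdef
  have herr_nonneg : ∀ x, 0 ≤ err x := fun x => by positivity
  have herrto : Tendsto err atTop (nhds 0) := by
    have h1 : Tendsto (fun k : ℕ => ε k + ε (k+1)) atTop (nhds 0) := by
      have := εto.add (εto.comp (tendsto_add_atTop_nat 1))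
      simpa using this
    exact (h1.comp hKtop)
  -- per-point facts
  have hs_mem : ∀ x : ℝ, 0 ≤ x → (x - t (K x)) ∈ Set.Icc (0:ℝ) (L (K x)) := by
    intro x hx
    constructor
    · linarith [hKle x hx]
    · linarith [hKlt x, hLge (K x)]
  have hL_mem : ∀ k, (L k) ∈ Set.Icc (0:ℝ) (L k) := fun k => ⟨le_of_lt (hLpos k), le_refl _⟩
  have h0_mem : ∀ k, (0:ℝ) ∈ Set.Icc (0:ℝ) (L k) := fun k => ⟨le_refl _, le_of_lt (hLpos k)⟩
  have dwQ : ∀ x, 0 ≤ x → dist (w (K x)) (Q x) = x - t (K x) := by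
    intro x hx
    have := hγiso (K x) 0 (h0_mem (K x)) (x - t (K x)) (hs_mem x hx)
    rw [hγ0] at this
    rw [this, abs_of_nonpos (by linarith [hKle x hx])]
    ring
  have dQw1 : ∀ x, 0 ≤ x → dist (Q x) (w (K x + 1)) = L (K x) - (x - t (K x)) := by
    intro x hx
    have := hγiso (K x) (x - t (K x)) (hs_mem x hx) (L (K x)) (hL_mem (K x))
    rw [hγ1] at this
    rw [this, abs_of_nonpos (by linarith [(hs_mem x hx).2])]
    ring
  have hdist_le : ∀ x, 0 ≤ x → dist b (Q x) ≤ x := by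
    intro x hx
    have h1 := dist_triangle b (w (K x)) (Q x)
    rw [dwQ x hx] at h1
    have h2 : dist b (w (K x)) = t (K x) := rfl
    rw [h2] at h1
    linarith
  have hdist_ge : ∀ x, 0 ≤ x → x - err x ≤ dist b (Q x) := by
    intro x hx
    have h1 := dist_triangle b (Q x) (w (K x + 1))
    rw [dQw1 x hx] at h1
    have h2 : dist b (w (K x + 1)) = t (K x + 1) := rfl
    have h3 := hLle (K x)
    have h4 : ε (K x) ≤ err x := by
      simp only [herrdef]; linarith [εpos (K x + 1)]
    linarith
  have hh_le : ∀ x, 0 ≤ x → h (Q x) ≤ -x + err x := by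
    intro x hx
    have h1 : h (Q x) - h (w (K x + 1)) ≤ dist (Q x) (w (K x + 1)) := horoLim_lip hl _ _
    rw [dQw1 x hx] at h1
    have h2 := W5 (K x + 1)
    have h3 := hLle (K x)
    have h4 := hKle x hx
    simp only [herrdef]
    linarith
  have hdist_QQ : ∀ x x', 0 ≤ x → x ≤ x' → dist (Q x) (Q x') ≤ x' - x + err x := by
    intro x x' hx hxx'
    have hx' : 0 ≤ x' := le_trans hx hxx'
    rcases eq_or_lt_of_le (hKmono x x' hxx') with heq | hlt
    · -- same segment
      have : dist (Q x) (Q x') = |x - t (K x) - (x' - t (K x'))| := by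
        simp only [hQdef]
        rw [← heq]
        exact hγiso (K x) _ (hs_mem x hx) _ (heq ▸ hs_mem x' hx')
      rw [this, ← heq, abs_of_nonpos (by linarith)]
      have := herr_nonneg x
      linarith
    · -- K x + 1 ≤ K x'
      have hk1 : K x + 1 ≤ K x' := hlt
      have h1 := dist_triangle (Q x) (w (K x + 1)) (Q x')
      have h2 := dist_triangle (w (K x + 1)) (w (K x')) (Q x')
      have h3 := W4 (K x + 1) (K x') hk1
      rw [dist_comm (w (K x')) (w (K x + 1))] at h3
      have h4 := dQw1 x hx
      have h5 := dwQ x' hx'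
      have h6 := hLle (K x)
      have h7 := hKle x hx
      have h8 := hKle x' hx'
      simp only [herrdef]
      have h9 : dist (w (K x + 1)) (w (K x')) ≤ t (K x') - t (K x + 1) + ε (K x + 1) := by
        linarith
      linarith
  have hhoro : ∀ z, Tendsto (fun x => dist z (Q x) - x) atTop (nhds (h z)) := by
    intro z
    have hup : ∀ x, 0 ≤ x → dist z (Q x) - x ≤ horo b (w (K x)) z := by
      intro x hx
      have h1 := dist_triangle z (w (K x)) (Q x)
      rw [dwQ x hx] at h1
      simp only [horo]
      have : dist b (w (K x)) = t (K x) := rfl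
      rw [this]
      linarith
    have hlo : ∀ x, 0 ≤ x → horo b (w (K x + 1)) z - err x ≤ dist z (Q x) - x := by
      intro x hx
      have h1 := dist_triangle z (Q x) (w (K x + 1))
      rw [dQw1 x hx] at h1
      simp only [horo]
      have h2 : dist b (w (K x + 1)) = t (K x + 1) := rfl
      rw [h2]
      have h3 := hLle (K x)
      have h4 : ε (K x) ≤ err x := by
        simp only [herrdef]; linarith [εpos (K x + 1)]
      linarith
    have hcomp : Tendsto (fun x => σ (K x)) atTop atTop :=
      (hσmono.tendsto_atTop).comp hKtop
    have hup_t : Tendsto (fun x => horo b (w (K x)) z) atTop (nhds (h z)) := by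
      have h1 : Tendsto ((fun n => horo b (y n) z) ∘ (fun x => σ (K x))) atTop (nhds (h z)) :=
        (hl z).comp hcomp
      exact h1.congr (fun x => rfl)
    have hK1top : Tendsto (fun x : ℝ => K x + 1) atTop atTop :=
      tendsto_atTop_mono (fun x => Nat.le_succ (K x)) hKtop
    have hcomp1 : Tendsto (fun x => σ (K x + 1)) atTop atTop := by
      have h0 : Tendsto (σ ∘ fun x : ℝ => K x + 1) atTop atTop :=
        hσmono.tendsto_atTop.comp hK1top
      exact h0.congr (fun x => rfl)
    have hlo_t : Tendsto (fun x => horo b (w (K x + 1)) z - err x) atTop (nhds (h z)) := by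
      have h1 : Tendsto (fun x => horo b (w (K x + 1)) z) atTop (nhds (h z)) := by
        have h0 : Tendsto ((fun n => horo b (y n) z) ∘ (fun x => σ (K x + 1))) atTop (nhds (h z)) :=
          (hl z).comp hcomp1
        exact h0.congr (fun x => rfl)
      have h2 := h1.sub herrto
      simpa using h2
    exact tendsto_of_tendsto_of_tendsto_of_le_of_le' hlo_t hup_t
      ((eventually_ge_atTop (0:ℝ)).mono (fun x hx => hlo x hx))
      ((eventually_ge_atTop (0:ℝ)).mono (fun x hx => hup x hx))
  have hQ0 : Q 0 = b := by
    have hK0 : K 0 = 0 := by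
      have := hKle 0 (le_refl _)
      have h1 := htge (K 0)
      have : (K 0 : ℝ) ≤ 0 := le_trans h1 this
      exact_mod_cast le_antisymm (by exact_mod_cast this) (Nat.zero_le _)
    simp only [hQdef, hK0, ht0, sub_zero]
    rw [hγ0 0, hw0]
  exact ⟨⟨Q, err, hQ0, herr_nonneg, herrto, hdist_le, hdist_ge, hh_le, hdist_QQ, hhoro⟩⟩
section Product

variable {p : ℕ} {M : Fin p → Type*} [∀ j, MetricSpace (M j)]

/-- sup' of 1-Lipschitz-minus-constants is 1-Lipschitz on the product. -/
lemma sup'_lip (J : Finset (Fin p)) (hJ : J.Nonempty) (hs : ∀ j, M j → ℝ) (α : Fin p → ℝ)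
    (hlip : ∀ j, ∀ u v : M j, hs j u - hs j v ≤ dist u v) (u v : ∀ j, M j) :
    (J.sup' hJ fun j => hs j (u j) - α j) - (J.sup' hJ fun j => hs j (v j) - α j) ≤
      dist u v := by
  rw [sub_le_iff_le_add]
  refine Finset.sup'_le _ _ (fun j hj => ?_)
  have h1 : hs j (u j) - hs j (v j) ≤ dist (u j) (v j) := hlip j _ _
  have h2 : dist (u j) (v j) ≤ dist u v := dist_le_pi_dist u v j
  have h3 : hs j (v j) - α j ≤ J.sup' hJ fun j => hs j (v j) - α j :=
    Finset.le_sup' (fun j => hs j (v j) - α j) hj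
  linarith

/-- The main product construction: an almost geodesic sequence in the product
converging to the sup of the factor Busemann points shifted by `α`. -/
lemma product_seq (y : ∀ j, ℕ → M j)
    (hs : ∀ j, M j → ℝ) (hconv : ∀ j, HoroLim (y j 0) (y j) (hs j))
    (gp : ∀ j, GoodPath (y j 0) (hs j))
    (J : Finset (Fin p)) (hJ : J.Nonempty)
    (α : Fin p → ℝ) (hα : ∀ j ∈ J, 0 ≤ α j) (hα0 : ∃ j ∈ J, α j = 0) :
    ∃ (z : ℕ → ∀ j, M j) (E : ℕ → ℝ),
      HoroLim (fun j => y j 0) z (fun x => J.sup' hJ fun j => hs j (x j) - α j) ∧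
      IsAlmostGeodesicSeq z ∧
      Tendsto E atTop (nhds 0) ∧ (∀ n, 0 ≤ E n) ∧
      (∀ᶠ n : ℕ in atTop, dist (fun j => y j 0) (z n) ≤ n ∧
        ∀ j ∈ J, (-((n:ℝ) - α j) ≤ hs j (z n j) ∧
          hs j (z n j) ≤ -((n:ℝ) - α j) + E n)) := by
  classical
  obtain ⟨j0, hj0J, hj00⟩ := hα0
  set b : ∀ j, M j := fun j => y j 0 with hbdef
  set τ : Fin p → ℕ → ℝ := fun j n => max ((n:ℝ) - α j) 0 with hτdef
  set z : ℕ → ∀ j, M j := fun n j => if j ∈ J then (gp j).Q (τ j n) else b j with hzdef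
  set E : ℕ → ℝ := fun n => J.sup' hJ fun j => (gp j).err (τ j n) with hEdef
  have hτ0 : ∀ j ∈ J, τ j 0 = 0 := by
    intro j hj
    have h1 : ((0:ℕ):ℝ) - α j ≤ 0 := by
      simp only [Nat.cast_zero, zero_sub, neg_nonpos]
      exact hα j hj
    simp only [hτdef]
    exact max_eq_right h1
  have hτnonneg : ∀ j n, 0 ≤ τ j n := fun j n => le_max_right _ _
  have hτtop : ∀ j ∈ J, Tendsto (fun n : ℕ => τ j n) atTop atTop := by
    intro j hj
    refine tendsto_atTop_mono (fun n => le_max_left _ _) ?_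
    exact (tendsto_atTop_add_const_right atTop (-(α j)) tendsto_natCast_atTop_atTop).congr
      (fun n => by ring)
  -- eventual formula for τ
  have hτev : ∀ j ∈ J, ∀ᶠ n : ℕ in atTop, τ j n = (n:ℝ) - α j := by
    intro j hj
    filter_upwards [(tendsto_natCast_atTop_atTop (R := ℝ)).eventually_ge_atTop (α j)] with n hn
    simp only [hτdef]
    exact max_eq_left (by linarith)
  have hτj0 : ∀ n : ℕ, τ j0 n = (n:ℝ) := by
    intro n
    simp only [hτdef, hj00, sub_zero]
    exact max_eq_left (Nat.cast_nonneg n)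
  have hz0 : z 0 = b := by
    funext j
    simp only [hzdef]
    split_ifs with hj
    · rw [hτ0 j hj, (gp j).Q0]
    · rfl
  have hznJ : ∀ n, ∀ j ∈ J, z n j = (gp j).Q (τ j n) := by
    intro n j hj; simp only [hzdef, if_pos hj]
  have hznJ' : ∀ n, ∀ j, j ∉ J → z n j = b j := by
    intro n j hj; simp only [hzdef, if_neg hj]
  -- E properties
  have hE_nonneg : ∀ n, 0 ≤ E n := by
    intro n
    have := Finset.le_sup' (fun j => (gp j).err (τ j n)) hj0J
    exact le_trans ((gp j0).err_nonneg _) this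
  have hE_tendsto : Tendsto E atTop (nhds 0) := by
    have h1 : ∀ j ∈ J, Tendsto (fun n : ℕ => (gp j).err (τ j n)) atTop (nhds 0) :=
      fun j hj => (gp j).err_tendsto.comp (hτtop j hj)
    have h2 := tendsto_finset_sup' J hJ (fun j n => (gp j).err (τ j n)) (fun _ => 0) h1
    simpa using h2
  have hEerr : ∀ n, ∀ j ∈ J, (gp j).err (τ j n) ≤ E n :=
    fun n j hj => Finset.le_sup' (fun j => (gp j).err (τ j n)) hj
  -- distance from base point
  have hdistb_le : ∀ n : ℕ, dist b (z n) ≤ (n:ℝ) := by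
    intro n
    rw [dist_pi_le_iff (Nat.cast_nonneg n)]
    intro j
    by_cases hj : j ∈ J
    · rw [hznJ n j hj]
      refine le_trans ((gp j).dist_le _ (hτnonneg j n)) ?_
      simp only [hτdef]
      rcases max_cases ((n:ℝ) - α j) 0 with ⟨heq, _⟩ | ⟨heq, _⟩ <;> rw [heq]
      · linarith [hα j hj]
      · exact Nat.cast_nonneg n
    · rw [hznJ' n j hj]
      simp [Nat.cast_nonneg]
  have hdistb_ge : ∀ n : ℕ, (n:ℝ) - (gp j0).err ((n:ℝ)) ≤ dist b (z n) := by
    intro n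
    have h1 : dist (b j0) (z n j0) ≤ dist b (z n) := dist_le_pi_dist b (z n) j0
    have h2 := (gp j0).dist_ge (τ j0 n) (hτnonneg j0 n)
    have hb0 : b j0 = y j0 0 := rfl
    rw [hznJ n j0 hj0J, hb0, hτj0 n] at h1
    rw [hτj0 n] at h2
    linarith
  have herrn0 : Tendsto (fun n : ℕ => (gp j0).err ((n:ℝ))) atTop (nhds 0) :=
    (gp j0).err_tendsto.comp tendsto_natCast_atTop_atTop
  have hdistb_n : Tendsto (fun n : ℕ => dist b (z n) - (n:ℝ)) atTop (nhds 0) := by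
    refine tendsto_of_tendsto_of_tendsto_of_le_of_le'
      (g := fun n : ℕ => -((gp j0).err ((n:ℝ)))) (h := fun _ : ℕ => (0:ℝ))
      (by simpa using herrn0.neg) tendsto_const_nhds ?_ ?_
    · refine Eventually.of_forall (fun n => ?_)
      show -((gp j0).err ((n:ℝ))) ≤ dist b (z n) - (n:ℝ)
      linarith [hdistb_ge n]
    · refine Eventually.of_forall (fun n => ?_)
      show dist b (z n) - (n:ℝ) ≤ (0:ℝ)
      linarith [hdistb_le n]
  -- coordinates distance convergence
  have hcoord : ∀ (x : ∀ j, M j), ∀ j ∈ J,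
      Tendsto (fun n : ℕ => dist (x j) (z n j) - (n:ℝ)) atTop (nhds (hs j (x j) - α j)) := by
    intro x j hj
    have h1 : Tendsto (fun t : ℝ => dist (x j) ((gp j).Q t) - t) atTop (nhds (hs j (x j))) :=
      (gp j).horo_tendsto (x j)
    have h2 : Tendsto (fun n : ℕ => dist (x j) ((gp j).Q (τ j n)) - τ j n) atTop
        (nhds (hs j (x j))) := by
      have := h1.comp (hτtop j hj)
      exact this.congr (fun n => rfl)
    have h3 : ∀ᶠ n : ℕ in atTop,
        dist (x j) ((gp j).Q (τ j n)) - τ j n - α j = dist (x j) (z n j) - (n:ℝ) := by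
      filter_upwards [hτev j hj] with n hn
      rw [hznJ n j hj, hn]
      ring
    have h4 := h2.sub (tendsto_const_nhds (x := α j))
    exact Tendsto.congr' h3 h4
  -- dist x (z n) is eventually the sup over J
  have hdx : ∀ x : ∀ j, M j, ∀ᶠ n : ℕ in atTop,
      dist x (z n) = J.sup' hJ fun j => dist (x j) (z n j) := by
    intro x
    have hbig : ∀ᶠ n : ℕ in atTop, dist x b ≤ dist (x j0) (z n j0) := by
      have h1 : Tendsto (fun n : ℕ => dist (x j0) (z n j0) - (n:ℝ)) atTop
          (nhds (hs j0 (x j0) - α j0)) := hcoord x j0 hj0J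
      have h2 : Tendsto (fun n : ℕ => dist (x j0) (z n j0)) atTop atTop := by
        have h3 := h1.add_atTop (tendsto_natCast_atTop_atTop (R := ℝ))
        exact h3.congr (fun n => by ring)
      exact h2.eventually_ge_atTop _
    filter_upwards [hbig] with n hn
    have hge : ∀ j ∈ J, dist (x j) (z n j) ≤ dist x (z n) := fun j _ => dist_le_pi_dist _ _ j
    have hsup_nonneg : (0:ℝ) ≤ J.sup' hJ fun j => dist (x j) (z n j) :=
      le_trans dist_nonneg (Finset.le_sup' (fun j => dist (x j) (z n j)) hj0J)
    refine le_antisymm ?_ (Finset.sup'_le _ _ hge)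
    rw [dist_pi_le_iff hsup_nonneg]
    intro j
    by_cases hj : j ∈ J
    · exact Finset.le_sup' (fun j => dist (x j) (z n j)) hj
    · rw [hznJ' n j hj]
      exact le_trans (dist_le_pi_dist x b j)
        (le_trans hn (Finset.le_sup' (fun j => dist (x j) (z n j)) hj0J))
  -- HoroLim
  have hHoro : HoroLim b z (fun x => J.sup' hJ fun j => hs j (x j) - α j) := by
    intro x
    have hxs : Tendsto (fun n : ℕ => dist x (z n) - (n:ℝ)) atTop
        (nhds (J.sup' hJ fun j => hs j (x j) - α j)) := by
      have h1 : Tendsto (fun n : ℕ => J.sup' hJ fun j => dist (x j) (z n j) - (n:ℝ)) atTop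
          (nhds (J.sup' hJ fun j => hs j (x j) - α j)) :=
        tendsto_finset_sup' J hJ (fun j n => dist (x j) (z n j) - (n:ℝ)) _
          (fun j hj => hcoord x j hj)
      refine Tendsto.congr' ?_ h1
      filter_upwards [hdx x] with n hn
      rw [hn]
      exact (Finset.comp_sup'_eq_sup'_comp hJ (fun r : ℝ => r - (n:ℝ))
        (fun a c => by simp [max_sub_sub_right])).symm
    have h2 : Tendsto (fun n : ℕ => (dist x (z n) - (n:ℝ)) - (dist b (z n) - (n:ℝ))) atTop
        (nhds (J.sup' hJ fun j => hs j (x j) - α j)) := by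
      simpa using hxs.sub hdistb_n
    exact h2.congr (fun n => by simp only [horo]; ring)
  -- almost geodesic
  have hAG : IsAlmostGeodesicSeq z := by
    constructor
    · refine tendsto_atTop_mono' atTop ?_
        ((tendsto_natCast_atTop_atTop (R := ℝ)).atTop_add (by simpa using herrn0.neg))
      filter_upwards [Eventually.of_forall hdistb_ge] with n hn
      rw [hz0, dist_comm]
      linarith
    · intro ε hε
      -- choose N
      have hev1 : ∀ᶠ T : ℝ in atTop, ∀ j ∈ J, (gp j).err T < ε / 4 := by
        rw [Finset.eventually_all]
        intro j hj
        exact (gp j).err_tendsto.eventually (gt_mem_nhds (by linarith))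
      obtain ⟨T0, hT0⟩ := (eventually_atTop).mp hev1
      set T : ℝ := max T0 0 with hTdef
      have hTnn : (0:ℝ) ≤ T := le_max_right _ _
      have hT : ∀ u ≥ T, ∀ j ∈ J, (gp j).err u < ε / 4 :=
        fun u hu => hT0 u (le_trans (le_max_left _ _) hu)
      set A : ℝ := J.sup' hJ α with hAdef
      have hA_nonneg : 0 ≤ A := hj00 ▸ Finset.le_sup' α hj0J
      obtain ⟨N, hN⟩ := (eventually_atTop).mp
        (((tendsto_natCast_atTop_atTop (R := ℝ)).eventually_ge_atTop (A + (T + A) + 1)))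
      refine ⟨N, fun m k hNk hkm => ?_⟩
      have hkN := hN k hNk
      have hmN := hN m (le_trans hNk hkm)
      have hkA : ∀ j ∈ J, τ j k = (k:ℝ) - α j ∧ T ≤ (k:ℝ) - α j := by
        intro j hj
        have hαA : α j ≤ A := Finset.le_sup' α hj
        constructor
        · exact max_eq_left (by linarith)
        · linarith
      have hmk : (k:ℝ) ≤ (m:ℝ) := Nat.cast_le.mpr hkm
      -- dist (z m) (z k) ≤ m - k + ε/4
      have hzz : dist (z m) (z k) ≤ (m:ℝ) - (k:ℝ) + ε / 4 := by
        rw [dist_comm, dist_pi_le_iff (by linarith)]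
        intro j
        by_cases hj : j ∈ J
        · obtain ⟨hτk, hTk⟩ := hkA j hj
          have hτm : τ j m = (m:ℝ) - α j := by
            have hαA : α j ≤ A := Finset.le_sup' α hj
            exact max_eq_left (by linarith)
          rw [hznJ m j hj, hznJ k j hj, hτk, hτm]
          have h1 := (gp j).dist_QQ ((k:ℝ) - α j) ((m:ℝ) - α j)
            (by rw [← hτk]; exact hτnonneg j k) (by linarith)
          have h2 : (gp j).err ((k:ℝ) - α j) < ε / 4 := hT _ hTk j hj
          linarith
        · rw [hznJ' m j hj, hznJ' k j hj]
          simp only [dist_self]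
          linarith
      have hbk : dist b (z k) ≤ (k:ℝ) := hdistb_le k
      have hbm : (m:ℝ) - ε / 4 ≤ dist b (z m) := by
        have h1 := hdistb_ge m
        have h2 : (gp j0).err ((m:ℝ)) < ε / 4 := hT _ (by linarith) j0 hj0J
        linarith
      rw [hz0]
      rw [dist_comm (z m) b, dist_comm (z k) b] at *
      linarith
  -- eventual bounds
  have hbounds : ∀ᶠ n : ℕ in atTop, dist b (z n) ≤ (n:ℝ) ∧
      ∀ j ∈ J, (-((n:ℝ) - α j) ≤ hs j (z n j) ∧ hs j (z n j) ≤ -((n:ℝ) - α j) + E n) := by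
    have hevτ : ∀ᶠ n : ℕ in atTop, ∀ j ∈ J, τ j n = (n:ℝ) - α j := by
      rw [Finset.eventually_all]
      exact fun j hj => hτev j hj
    filter_upwards [hevτ] with n hn
    refine ⟨hdistb_le n, fun j hj => ?_⟩
    have hnn : (0:ℝ) ≤ (n:ℝ) - α j := (hn j hj) ▸ hτnonneg j n
    rw [hznJ n j hj, hn j hj]
    constructor
    · have h1 := horoLim_neg_dist_le (hconv j) ((gp j).Q ((n:ℝ) - α j))
      have h2 := (gp j).dist_le ((n:ℝ) - α j) hnn
      linarith
    · have h1 := (gp j).h_le ((n:ℝ) - α j) hnn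
      have h2 := hEerr n j hj
      rw [hn j hj] at h2
      linarith
  exact ⟨z, E, hHoro, hAG, hE_tendsto, hE_nonneg, hbounds⟩


end Product
/-- Detour cost lower bound via a test point. -/
lemma detourCost_ge_of_lip {M : Type*} [MetricSpace M] (b : M) (h h' : M → ℝ)
    (hlip : ∀ u v, h' u - h' v ≤ dist u v) (x : M) :
    ((h' x - h x : ℝ) : EReal) ≤ detourCost b h h' := by
  refine le_iInf (fun z => ?_)
  obtain ⟨zs, hz⟩ := z
  have hglim : Tendsto (fun n : ℕ => (h' x - horo b (zs n) x : ℝ)) atTop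
      (nhds (h' x - h x)) := tendsto_const_nhds.sub (hz x)
  have hcoe : Tendsto (fun n : ℕ => ((h' x - horo b (zs n) x : ℝ) : EReal)) atTop
      (nhds ((h' x - h x : ℝ) : EReal)) := EReal.tendsto_coe.mpr hglim
  have hev : ∀ n : ℕ, ((h' x - horo b (zs n) x : ℝ) : EReal) ≤
      ((dist b (zs n) + h' (zs n) : ℝ) : EReal) := by
    intro n
    apply EReal.coe_le_coe_iff.mpr
    have h1 := hlip x (zs n)
    have h2 := dist_triangle x b (zs n)
    simp only [horo]
    linarith
  calc ((h' x - h x : ℝ) : EReal)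
      = Filter.liminf (fun n : ℕ => ((h' x - horo b (zs n) x : ℝ) : EReal)) atTop :=
        (hcoe.liminf_eq).symm
    _ ≤ _ := Filter.liminf_le_liminf (Eventually.of_forall hev)

lemma detourCost_le_liminf {M : Type*} [MetricSpace M] (b : M) (h₁ h₂ : M → ℝ)
    (z : ℕ → M) (hz : HoroLim b z h₁) :
    detourCost b h₁ h₂ ≤
      Filter.liminf (fun n : ℕ => ((dist b (z n) + h₂ (z n) : ℝ) : EReal)) atTop :=
  iInf_le (fun w : {w : ℕ → M // HoroLim b w h₁} =>
    Filter.liminf (fun n : ℕ => ((dist b (w.1 n) + h₂ (w.1 n) : ℝ) : EReal)) atTop) ⟨z, hz⟩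

section Final

variable {p : ℕ} {M : Fin p → Type*} [∀ j, MetricSpace (M j)]

lemma busemann_of_sup' (y : ∀ j, ℕ → M j)
    (hs : ∀ j, M j → ℝ) (hconv : ∀ j, HoroLim (y j 0) (y j) (hs j))
    (gp : ∀ j, GoodPath (y j 0) (hs j))
    (J : Finset (Fin p)) (hJ : J.Nonempty)
    (α : Fin p → ℝ) (hα : ∀ j ∈ J, 0 ≤ α j) (hα0 : ∃ j ∈ J, α j = 0) :
    IsBusemannPoint (fun j => y j 0) (fun x => J.sup' hJ fun j => hs j (x j) - α j) := by
  obtain ⟨z, E, hH, hAG, hEto, hEnn, hB⟩ := product_seq y hs hconv gp J hJ α hα hα0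
  refine ⟨⟨⟨z, hH⟩, ?_⟩, z, hAG, hH⟩
  intro v heq
  set b : ∀ j, M j := fun j => y j 0 with hbdef
  have hev : ∀ᶠ n : ℕ in atTop,
      (J.sup' hJ fun j => hs j (z n j) - α j) ≤ -(n:ℝ) + E n := by
    filter_upwards [hB] with n hn
    refine Finset.sup'_le _ _ (fun j hj => ?_)
    have h1 := (hn.2 j hj).2
    have h2 := hα j hj
    linarith
  have hE1 : ∀ᶠ n : ℕ in atTop, E n < 1 := hEto.eventually (gt_mem_nhds one_pos)
  have hlarge : ∀ᶠ n : ℕ in atTop, dist b v + 2 ≤ (n:ℝ) :=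
    (tendsto_natCast_atTop_atTop (R := ℝ)).eventually_ge_atTop _
  obtain ⟨n, h1, h2, h3⟩ := (hev.and (hE1.and hlarge)).exists
  have h4 : (J.sup' hJ fun j => hs j (z n j) - α j) = horo b v (z n) := congrFun heq (z n)
  have h5 : -dist b v ≤ horo b v (z n) := by
    simp only [horo]
    linarith [dist_nonneg (x := z n) (y := v)]
  rw [← h4] at h5
  linarith

lemma cost_of_sup' (y : ∀ j, ℕ → M j)
    (hs : ∀ j, M j → ℝ) (hconv : ∀ j, HoroLim (y j 0) (y j) (hs j))
    (gp : ∀ j, GoodPath (y j 0) (hs j))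
    (J : Finset (Fin p)) (hJ : J.Nonempty)
    (α β : Fin p → ℝ) (hα : ∀ j ∈ J, 0 ≤ α j) (hα0 : ∃ j ∈ J, α j = 0)
    (hβ : ∀ j ∈ J, 0 ≤ β j) (hβ0 : ∃ j ∈ J, β j = 0) :
    detourCost (fun j => y j 0) (fun x => J.sup' hJ fun j => hs j (x j) - α j)
      (fun x => J.sup' hJ fun j => hs j (x j) - β j) =
      (((J.sup' hJ fun j => α j - β j : ℝ)) : EReal) := by
  obtain ⟨z, E, hH, hAG, hEto, hEnn, hB⟩ := product_seq y hs hconv gp J hJ α hα hα0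
  set b : ∀ j, M j := fun j => y j 0 with hbdef
  set C : ℝ := J.sup' hJ fun j => α j - β j with hCdef
  have hBlip : ∀ u v : ∀ j, M j,
      (J.sup' hJ fun j => hs j (u j) - β j) - (J.sup' hJ fun j => hs j (v j) - β j) ≤
        dist u v :=
    sup'_lip J hJ hs β (fun j => horoLim_lip (hconv j))
  -- bounds along z
  have hBup : ∀ᶠ n : ℕ in atTop,
      (J.sup' hJ fun j => hs j (z n j) - β j) ≤ -(n:ℝ) + E n + C := by
    filter_upwards [hB] with n hn
    refine Finset.sup'_le _ _ (fun j hj => ?_)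
    have h1 := (hn.2 j hj).2
    have h2 : α j - β j ≤ C := Finset.le_sup' (fun j => α j - β j) hj
    linarith
  have hAup : ∀ᶠ n : ℕ in atTop,
      (J.sup' hJ fun j => hs j (z n j) - α j) ≤ -(n:ℝ) + E n := by
    filter_upwards [hB] with n hn
    refine Finset.sup'_le _ _ (fun j hj => ?_)
    have h1 := (hn.2 j hj).2
    have h2 := hα j hj
    linarith
  obtain ⟨jm, hjm, hjmv⟩ := Finset.exists_mem_eq_sup' hJ (fun j => α j - β j)
  have hBlow : ∀ᶠ n : ℕ in atTop,
      -(n:ℝ) + C ≤ (J.sup' hJ fun j => hs j (z n j) - β j) := by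
    filter_upwards [hB] with n hn
    have h1 := (hn.2 jm hjm).1
    have h2 : hs jm (z n jm) - β jm ≤ J.sup' hJ fun j => hs j (z n j) - β j :=
      Finset.le_sup' (fun j => hs j (z n j) - β j) hjm
    have h3 : C = α jm - β jm := hjmv
    linarith
  -- upper bound on detour cost
  refine le_antisymm ?_ ?_
  · have h1 : detourCost b (fun x => J.sup' hJ fun j => hs j (x j) - α j)
        (fun x => J.sup' hJ fun j => hs j (x j) - β j) ≤
        Filter.liminf (fun n : ℕ =>
          ((dist b (z n) + (J.sup' hJ fun j => hs j (z n j) - β j) : ℝ) : EReal)) atTop :=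
      detourCost_le_liminf b _ _ z hH
    refine le_trans h1 ?_
    have h2 : ∀ᶠ n : ℕ in atTop,
        ((dist b (z n) + (J.sup' hJ fun j => hs j (z n j) - β j) : ℝ) : EReal) ≤
          (((C + E n : ℝ)) : EReal) := by
      filter_upwards [hB, hBup] with n hn hup
      apply EReal.coe_le_coe_iff.mpr
      have hd := hn.1
      linarith
    have h3 : Tendsto (fun n : ℕ => (((C + E n : ℝ)) : EReal)) atTop
        (nhds ((C : ℝ) : EReal)) := by
      apply EReal.tendsto_coe.mpr
      have := (tendsto_const_nhds (x := C) (f := atTop (α := ℕ))).add hEto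
      simpa using this
    calc Filter.liminf (fun n : ℕ =>
          ((dist b (z n) + (J.sup' hJ fun j => hs j (z n j) - β j) : ℝ) : EReal)) atTop
        ≤ Filter.liminf (fun n : ℕ => (((C + E n : ℝ)) : EReal)) atTop :=
          Filter.liminf_le_liminf h2
      _ = ((C : ℝ) : EReal) := h3.liminf_eq
  · have key : ∀ᶠ n : ℕ in atTop, (((C - E n : ℝ)) : EReal) ≤
        detourCost b (fun x => J.sup' hJ fun j => hs j (x j) - α j)
          (fun x => J.sup' hJ fun j => hs j (x j) - β j) := by
      filter_upwards [hBlow, hAup] with n hlo hup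
      refine le_trans ?_ (detourCost_ge_of_lip b (fun x => J.sup' hJ fun j => hs j (x j) - α j)
        (fun x => J.sup' hJ fun j => hs j (x j) - β j) hBlip (z n))
      apply EReal.coe_le_coe_iff.mpr
      linarith
    have h3 : Tendsto (fun n : ℕ => (((C - E n : ℝ)) : EReal)) atTop
        (nhds ((C : ℝ) : EReal)) := by
      apply EReal.tendsto_coe.mpr
      have := (tendsto_const_nhds (x := C) (f := atTop (α := ℕ))).sub hEto
      simpa using this
    exact le_of_tendsto h3 key

end Final
/-- detour distance between two product Busemann points built from the same
factor Busemann points equals the variation norm of α − β. -/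
theorem stmt_10 (p : ℕ) (M : Fin p → Type*) [∀ j, MetricSpace (M j)] [∀ j, ProperSpace (M j)]
    (hgeo : ∀ j, IsGeodesicSpace (M j))
    (y : ∀ j, ℕ → M j) (hy : ∀ j, IsAlmostGeodesicSeq (y j))
    (hs : ∀ j, M j → ℝ) (hconv : ∀ j, HoroLim (y j 0) (y j) (hs j))
    (J : Finset (Fin p)) (hJ : J.Nonempty)
    (α β : Fin p → ℝ) (hα : ∀ j ∈ J, 0 ≤ α j) (hα0 : ∃ j ∈ J, α j = 0)
    (hβ : ∀ j ∈ J, 0 ≤ β j) (hβ0 : ∃ j ∈ J, β j = 0) :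
    IsBusemannPoint (fun j => y j 0) (fun x => J.sup' hJ fun j => hs j (x j) - α j) ∧
    IsBusemannPoint (fun j => y j 0) (fun x => J.sup' hJ fun j => hs j (x j) - β j) ∧
    detourDist (fun j => y j 0)
        (fun x => J.sup' hJ fun j => hs j (x j) - α j)
        (fun x => J.sup' hJ fun j => hs j (x j) - β j) =
      (((J.sup' hJ fun j => α j - β j) + (J.sup' hJ fun j => β j - α j) : ℝ) : EReal) := by
  have gp : ∀ j, GoodPath (y j 0) (hs j) := fun j =>
    (exists_goodPath (hgeo j) (y j) (hy j) (hs j) (hconv j)).some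
  refine ⟨busemann_of_sup' y hs hconv gp J hJ α hα hα0,
    busemann_of_sup' y hs hconv gp J hJ β hβ hβ0, ?_⟩
  rw [detourDist, cost_of_sup' y hs hconv gp J hJ α β hα hα0 hβ hβ0,
    cost_of_sup' y hs hconv gp J hJ β α hβ hβ0 hα hα0, ← EReal.coe_add]
end
end
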